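/- arXiv:2101.03519 — 5 statements merged into one kernel-verified Lean document; each statement's English description precedes it below -/
import Mathlib

section
/- Let S and T be two distinct vertices of G. There exists a non-separating path from S to T if and only if S and T are not separated by a bridge (i.e. for every bridge e of G, the vertices S and T lie in the same connected component of G with e deleted). -/
/-!
If a path `p` from `S` to `T` uses a bridge `e`, then `G - e` contains the connected graph
`G - E(p)`; otherwise `p` itself is a walk in `G - e`. Either way `e` does not separate `S` and `T`.

Conversely, let `p` be a shortest walk from `S` to `T`. An edge `xy` of `p` that is a bridge would
separate `S` from `T`, so every edge `xy` of `p` lies on a cycle, and by chordality on a triangle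
`xzy`: the cycle closed by a shortest detour of length at least three has a chord, which would
shortcut the detour. Since `p` is shortest, its vertices span no edges besides its own, so `z` is
not on `p`. Hence deleting the edges of `p` keeps the endpoints of every deleted edge connected.
-/

open SimpleGraph

namespace NSP

variable {V : Type*}

/-- A chordal graph: every cycle with at least four vertices has a chord,
i.e. an edge not on the cycle joining two vertices of the cycle. -/
def Chordal (G : SimpleGraph V) : Prop :=
  ∀ ⦃v : V⦄ (c : G.Walk v v), c.IsCycle → 4 ≤ c.length →
    ∃ u w : V, u ∈ c.support ∧ w ∈ c.support ∧ G.Adj u w ∧ s(u, w) ∉ c.edges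

/-- A path in `G`, given as a nonempty list of vertices with consecutive
vertices adjacent. -/
def IsPathSeq (G : SimpleGraph V) (p : List V) : Prop :=
  p ≠ [] ∧ p.Chain' G.Adj

/-- A simple path: a path all of whose vertices are distinct. -/
def IsSimpleSeq (G : SimpleGraph V) (p : List V) : Prop :=
  IsPathSeq G p ∧ p.Nodup

/-- The set of edges of a path sequence. -/
def edgesOf (p : List V) : Set (Sym2 V) :=
  {e | ∃ (i : ℕ) (h : i + 1 < p.length),
    e = s(p.get ⟨i, by omega⟩, p.get ⟨i + 1, h⟩)}

/-- A set of edges is separating if deleting it from `G` leaves a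
disconnected graph. -/
def Separating (G : SimpleGraph V) (D : Set (Sym2 V)) : Prop :=
  ¬ (G.deleteEdges D).Connected

/-- A path is separating if its edge set is separating. -/
def SeparatingPath (G : SimpleGraph V) (p : List V) : Prop :=
  Separating G (edgesOf p)

/-- The contiguous subpath `p_{i,j} = p_i → ⋯ → p_j`. -/
def subseq (p : List V) (i j : ℕ) : List V :=
  (p.take (j + 1)).drop i

/-- `q` is a contiguous subpath of `p`. -/
def ContigSub (q p : List V) : Prop :=
  ∃ i j : ℕ, i ≤ j ∧ j < p.length ∧ q = subseq p i j

/-- A separator path: a simple separating path that does not properly contain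
(as a contiguous subpath) a separating path. -/
def SeparatorPath (G : SimpleGraph V) (p : List V) : Prop :=
  IsSimpleSeq G p ∧ SeparatingPath G p ∧
    ∀ q : List V, ContigSub q p → q ≠ p → ¬ SeparatingPath G q

/-- `u` and `v` are weakly `p`-connected: some path between `u` and `v`
shares no edge with `p`. -/
def WeaklyConn (G : SimpleGraph V) (p : List V) (u v : V) : Prop :=
  ∃ q : List V, IsPathSeq G q ∧ q.head? = some u ∧ q.getLast? = some v ∧
    edgesOf q ∩ edgesOf p = ∅

/-- `u` and `v` are strongly `p`-connected: some path between `u` and `v`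
shares no edge with `p` and, except at its endpoints, no vertex with `p`. -/
def StronglyConn (G : SimpleGraph V) (p : List V) (u v : V) : Prop :=
  ∃ q : List V, IsPathSeq G q ∧ q.head? = some u ∧ q.getLast? = some v ∧
    edgesOf q ∩ edgesOf p = ∅ ∧
    ∀ (i : ℕ) (h : i < q.length), 0 < i → i + 1 < q.length → q.get ⟨i, h⟩ ∉ p

/-- A path `r` is traversable if some simple path from `S` to `T` contains
`r` as a contiguous subpath. -/
def Traversable (G : SimpleGraph V) (S T : V) (r : List V) : Prop :=
  ∃ p : List V, IsSimpleSeq G p ∧ p.head? = some S ∧ p.getLast? = some T ∧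
    ContigSub r p

/-- A bad vertex: the middle vertex of a traversable separator path with
exactly two edges. -/
def BadVertex (G : SimpleGraph V) (S T : V) (v : V) : Prop :=
  ∃ r : List V, SeparatorPath G r ∧ Traversable G S T r ∧ r.length = 3 ∧
    r[1]? = some v

/-- A separator path is useful if each two-edge segment is shorter than the
corresponding chord. -/
def Useful (w : Sym2 V → ℝ) (r : List V) : Prop :=
  ∀ (i : ℕ) (h : i + 2 < r.length),
    w s(r.get ⟨i, by omega⟩, r.get ⟨i + 1, by omega⟩) +
      w s(r.get ⟨i + 1, by omega⟩, r.get ⟨i + 2, h⟩) <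
      w s(r.get ⟨i, by omega⟩, r.get ⟨i + 2, h⟩)

/-- A normal separator path: traversable, useful, and with more than two
edges (i.e. at least four vertices). -/
def NormalSep (G : SimpleGraph V) (w : Sym2 V → ℝ) (S T : V) (r : List V) : Prop :=
  SeparatorPath G r ∧ Traversable G S T r ∧ Useful w r ∧ 3 < r.length

/-- `v` is an inner vertex of `r` (a vertex of `r` other than its endpoints). -/
def InnerMem (r : List V) (v : V) : Prop :=
  ∃ (i : ℕ) (h : i < r.length), 0 < i ∧ i + 1 < r.length ∧ r.get ⟨i, h⟩ = v

/-- The total length of a path with respect to edge lengths `w`. -/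
def pathLength (w : Sym2 V → ℝ) (p : List V) : ℝ :=
  ((p.zip p.tail).map fun q => w s(q.1, q.2)).sum

/-- All edges of `G` have positive length. -/
def EdgePos (G : SimpleGraph V) (w : Sym2 V → ℝ) : Prop :=
  ∀ e ∈ G.edgeSet, 0 < w e

/-- The subgraph of `G` formed by the edges of `D` together with their
endpoints. -/
def edgeSubgraph (G : SimpleGraph V) (D : Set (Sym2 V)) : G.Subgraph where
  verts := {v | ∃ e ∈ D ∩ G.edgeSet, v ∈ e}
  Adj u v := s(u, v) ∈ D ∧ G.Adj u v
  adj_sub h := h.2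
  edge_vert {v w} h := ⟨s(v, w), ⟨h.1, h.2⟩, Sym2.mem_mk_left v w⟩
  symm := ⟨fun u v h => by
    obtain ⟨h1, h2⟩ := h
    exact ⟨by rwa [Sym2.eq_swap], h2.symm⟩⟩

/-- For a simple path `P₀` in `G` and indices `i ≤ j < |P₀|`: in the graph
obtained by deleting the edges of `P₀` from `G`, vertices `P₀ₖ`
(`i ≤ k ≤ j`) of equal parity of index are in a common connected component,
while those of different parity are in different connected components. -/
def OddEvenSplit (G : SimpleGraph V) (P0 : List V) (i j : ℕ)
    (hj : j < P0.length) : Prop :=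
  (∀ (k l : ℕ) (hik : i ≤ k) (hkj : k ≤ j) (hil : i ≤ l) (hlj : l ≤ j),
      k % 2 = l % 2 →
      (G.deleteEdges (edgesOf P0)).Reachable
        (P0.get ⟨k, by omega⟩) (P0.get ⟨l, by omega⟩)) ∧
  (∀ (k l : ℕ) (hik : i ≤ k) (hkj : k ≤ j) (hil : i ≤ l) (hlj : l ≤ j),
      k % 2 ≠ l % 2 →
      ¬ (G.deleteEdges (edgesOf P0)).Reachable
        (P0.get ⟨k, by omega⟩) (P0.get ⟨l, by omega⟩))

end NSP

namespace List

variable {α : Type*} {l : List α}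

lemma Nodup.getElem_notMem_take (hl : l.Nodup) {i : ℕ} (hi : i < l.length) :
    l[i] ∉ l.take i := by
  intro hmem
  obtain ⟨j, hj, hji⟩ := getElem_of_mem hmem
  rw [getElem_take] at hji
  have := (hl.getElem_inj_iff).1 hji
  grind

lemma Nodup.getElem_notMem_drop_succ (hl : l.Nodup) {i : ℕ} (hi : i < l.length) :
    l[i] ∉ l.drop (i + 1) := by
  intro hmem
  obtain ⟨j, hj, hji⟩ := getElem_of_mem hmem
  rw [getElem_drop] at hji
  have := (hl.getElem_inj_iff).1 hji
  omega

end List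

namespace SimpleGraph

variable {V : Type*} {G : SimpleGraph V}

namespace Walk

variable {u v : V} {p : G.Walk u v}

lemma dist_getVert_of_length_eq_dist (hp : p.length = G.dist u v) {i : ℕ} (hi : i ≤ p.length) :
    G.dist u (p.getVert i) = i ∧ G.dist (p.getVert i) v = p.length - i := by
  have hleft : G.dist u (p.getVert i) ≤ i := by
    simpa [hi] using dist_le (p.take i)
  have hright : G.dist (p.getVert i) v ≤ p.length - i := by
    simpa using dist_le (p.drop i)
  have := (p.take i).reachable.dist_triangle_left v
  omega

lemma getVert_consecutive_of_adj_of_length_eq_dist (hp : p.length = G.dist u v) {i j : ℕ}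
    (hi : i ≤ p.length) (hj : j ≤ p.length) (hadj : G.Adj (p.getVert i) (p.getVert j)) :
    j = i + 1 ∨ i = j + 1 := by
  have hne : i ≠ j := by
    rintro rfl
    exact hadj.ne rfl
  have := hadj.diff_dist_adj (u := u)
  rw [(dist_getVert_of_length_eq_dist hp hi).1, (dist_getVert_of_length_eq_dist hp hj).1] at this
  omega

lemma mk_mem_edges_of_adj_of_length_eq_dist (hp : p.length = G.dist u v) {a b : V}
    (ha : a ∈ p.support) (hb : b ∈ p.support) (hab : G.Adj a b) : s(a, b) ∈ p.edges := by
  obtain ⟨i, rfl, hi⟩ := mem_support_iff_exists_getVert.1 ha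
  obtain ⟨j, rfl, hj⟩ := mem_support_iff_exists_getVert.1 hb
  rw [mk_mem_edges_iff_exists]
  rcases getVert_consecutive_of_adj_of_length_eq_dist hp hi hj hab with rfl | rfl
  · exact ⟨i, by omega, rfl⟩
  · exact ⟨j, by omega, Sym2.eq_swap⟩

lemma IsTrail.not_reachable_deleteEdges_of_isBridge (hp : p.IsTrail) {e : Sym2 V}
    (he : e ∈ p.edges) (hb : G.IsBridge e) : ¬ (G.deleteEdges {e}).Reachable u v := by
  intro huv
  obtain ⟨i, hi, rfl⟩ := List.getElem_of_mem he
  have hpre : p.edges[i] ∉ (p.take i).edges := by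
    rw [edges_take]
    exact hp.edges_nodup.getElem_notMem_take hi
  have hsuf : p.edges[i] ∉ (p.drop (i + 1)).edges := by
    rw [edges_drop]
    exact hp.edges_nodup.getElem_notMem_drop_succ hi
  rw [getElem_edges, isBridge_iff] at hb
  rw [getElem_edges] at hpre hsuf huv
  exact hb (((p.take i).toDeleteEdge _ hpre).reachable.symm.trans
    (huv.trans ((p.drop (i + 1)).toDeleteEdge _ hsuf).reachable.symm))

end Walk

lemma Connected.connected_deleteEdges_of_forall_reachable (hG : G.Connected) {D : Set (Sym2 V)}
    (hD : ∀ ⦃x y : V⦄, G.Adj x y → s(x, y) ∈ D → (G.deleteEdges D).Reachable x y) :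
    (G.deleteEdges D).Connected := by
  refine (connected_iff _).2 ⟨fun a b => ?_, hG.nonempty⟩
  obtain ⟨w⟩ := hG.preconnected a b
  induction w with
  | nil => rfl
  | @cons x y _ hxy _ ih =>
    refine Reachable.trans ?_ ih
    by_cases hxyD : s(x, y) ∈ D
    · exact hD hxy hxyD
    · exact (deleteEdges_adj.2 ⟨hxy, hxyD⟩).reachable

end SimpleGraph

namespace NSP

variable {V : Type*} {G : SimpleGraph V}

lemma Chordal.length_le_two_of_length_eq_dist (hG : Chordal G) {u v : V} (huv : G.Adj u v)
    {q : (G.deleteEdges {s(u, v)}).Walk u v}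
    (hq : q.length = (G.deleteEdges {s(u, v)}).dist u v) : q.length ≤ 2 := by
  have hHG : G.deleteEdges {s(u, v)} ≤ G := deleteEdges_le _
  have hq_uv : s(v, u) ∉ (q.mapLe hHG).edges := by
    rw [Walk.edges_mapLe_eq_edges]
    intro h
    simpa [Sym2.eq_swap] using q.edges_subset_edgeSet h
  let c : G.Walk v v := .cons huv.symm (q.mapLe hHG)
  have hc : c.IsCycle := (Walk.cons_isCycle_iff _ _).2
    ⟨(q.isPath_of_length_eq_dist hq).mapLe hHG, hq_uv⟩
  by_contra! hlong
  obtain ⟨a, b, ha, hb, hab, habc⟩ := hG c hc (by simp [c]; omega)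
  have hsupp : ∀ x ∈ c.support, x ∈ q.support := by
    simp [c]
  refine habc ?_
  rw [Walk.edges_cons, Walk.edges_mapLe_eq_edges]
  refine List.mem_cons_of_mem _ <| Walk.mk_mem_edges_of_adj_of_length_eq_dist hq
    (hsupp a ha) (hsupp b hb) (deleteEdges_adj.2 ⟨hab, ?_⟩)
  intro h
  rw [Set.mem_singleton_iff] at h
  exact habc (by simp [c, h, Sym2.eq_swap])

lemma Chordal.exists_adj_adj_of_not_isBridge (hG : Chordal G) {u v : V} (huv : G.Adj u v)
    (hb : ¬ G.IsBridge s(u, v)) : ∃ w, G.Adj u w ∧ G.Adj w v := by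
  obtain ⟨q, hq⟩ := (isBridge_iff.not_left.1 hb).exists_walk_length_eq_dist
  have hHG : G.deleteEdges {s(u, v)} ≤ G := deleteEdges_le _
  have hlen : q.length = 2 := by
    have h0 : q.length ≠ 0 := fun h => huv.ne (Walk.eq_of_length_eq_zero h)
    have h1 : q.length ≠ 1 := fun h => by simpa using Walk.adj_of_length_eq_one h
    have := hG.length_le_two_of_length_eq_dist huv hq
    omega
  refine ⟨q.getVert 1, hHG ?_, hHG ?_⟩
  · simpa using q.adj_getVert_succ (i := 0) (by omega)
  · simpa [← hlen, Walk.getVert_length] using q.adj_getVert_succ (i := 1) (by omega)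

lemma Chordal.reachable_deleteEdges_edges_of_length_eq_dist (hG : Chordal G) {u v x y : V}
    {p : G.Walk u v} (hp : p.length = G.dist u v) (he : s(x, y) ∈ p.edges)
    (hb : ¬ G.IsBridge s(x, y)) :
    (G.deleteEdges {e | e ∈ p.edges}).Reachable x y := by
  obtain ⟨z, hxz, hzy⟩ := hG.exists_adj_adj_of_not_isBridge (p.adj_of_mem_edges he) hb
  have hz : z ∉ p.support := by
    intro hz
    obtain ⟨k, rfl, hk⟩ := Walk.mem_support_iff_exists_getVert.1 hz
    obtain ⟨i, hi, hxy⟩ := (Walk.mk_mem_edges_iff_exists p).1 he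
    have hadj : G.Adj (p.getVert k) (p.getVert i) ∧ G.Adj (p.getVert k) (p.getVert (i + 1)) := by
      rcases Sym2.eq_iff.1 hxy with ⟨rfl, rfl⟩ | ⟨rfl, rfl⟩
      · exact ⟨hxz.symm, hzy⟩
      · exact ⟨hzy, hxz.symm⟩
    have h1 := Walk.getVert_consecutive_of_adj_of_length_eq_dist hp hk hi.le hadj.1
    have h2 := Walk.getVert_consecutive_of_adj_of_length_eq_dist hp hk hi hadj.2
    omega
  have hxz' : (G.deleteEdges {e | e ∈ p.edges}).Adj x z :=
    deleteEdges_adj.2 ⟨hxz, fun h => hz (p.snd_mem_support_of_mem_edges h)⟩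
  have hzy' : (G.deleteEdges {e | e ∈ p.edges}).Adj z y :=
    deleteEdges_adj.2 ⟨hzy, fun h => hz (p.fst_mem_support_of_mem_edges h)⟩
  exact hxz'.reachable.trans hzy'.reachable

lemma edgesOf_support {u v : V} (p : G.Walk u v) : edgesOf p.support = {e | e ∈ p.edges} := by
  ext e
  simp only [edgesOf, List.get_eq_getElem, Walk.support_getElem_eq_getVert, Walk.length_support,
    Set.mem_ofPred_eq]
  constructor
  · rintro ⟨i, hi, rfl⟩
    exact (Walk.mk_mem_edges_iff_exists p).2 ⟨i, by omega, rfl⟩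
  · intro he
    obtain ⟨i, hi, rfl⟩ := List.getElem_of_mem he
    exact ⟨i, by simpa using hi, Walk.getElem_edges hi⟩

lemma isPathSeq_support {u v : V} (p : G.Walk u v) : IsPathSeq G p.support :=
  ⟨p.support_ne_nil, p.isChain_adj_support⟩

lemma IsPathSeq.reachable_deleteEdges {p : List V} (hp : IsPathSeq G p) {D : Set (Sym2 V)}
    (hD : ∀ e ∈ edgesOf p, e ∉ D) {a b : V} (ha : p.head? = some a) (hb : p.getLast? = some b) :
    (G.deleteEdges D).Reachable a b := by
  have hchain : p.IsChain (G.deleteEdges D).Adj := by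
    rw [List.isChain_iff_getElem]
    exact fun i hi =>
      deleteEdges_adj.2 ⟨List.isChain_iff_getElem.1 hp.2 i hi, hD _ ⟨i, hi, rfl⟩⟩
  rw [List.head?_eq_some_head hp.1, Option.some_inj] at ha
  rw [List.getLast?_eq_some_getLast hp.1, Option.some_inj] at hb
  subst ha hb
  exact (reachable_iff_reflTransGen _ _).2
    (List.relationReflTransGen_of_exists_isChain p hchain hp.1)

theorem exists_nonSeparating_path_iff_not_bridge_separated_general
    {V : Type*} (G : SimpleGraph V)
    (hconn : G.Connected) (hchordal : Chordal G) (S T : V) :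
    (∃ p : List V, IsPathSeq G p ∧ p.head? = some S ∧ p.getLast? = some T ∧
      ¬ SeparatingPath G p) ↔
    (∀ e : Sym2 V, (e ∈ G.edgeSet ∧ G.IsBridge e) → (G.deleteEdges {e}).Reachable S T) := by
  constructor
  · rintro ⟨p, hp, hS, hT, hsep⟩ e -
    by_cases he : e ∈ edgesOf p
    · have hle : G.deleteEdges (edgesOf p) ≤ G.deleteEdges {e} :=
        deleteEdges_anti (Set.singleton_subset_iff.2 he)
      exact ((not_not.1 hsep).mono hle).preconnected S T
    · exact hp.reachable_deleteEdges (by rintro _ he' rfl; exact he he') hS hT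
  · intro hbridge
    obtain ⟨p, hp⟩ := hconn.exists_walk_length_eq_dist S T
    refine ⟨p.support, isPathSeq_support p, by rw [← p.cons_tail_support]; rfl,
      by simp [List.getLast?_eq_some_getLast p.support_ne_nil], ?_⟩
    rw [SeparatingPath, Separating, not_not, edgesOf_support]
    refine hconn.connected_deleteEdges_of_forall_reachable fun x y hxy he => ?_
    refine hchordal.reachable_deleteEdges_edges_of_length_eq_dist hp he fun hb => ?_
    exact (p.isPath_of_length_eq_dist hp).isTrail.not_reachable_deleteEdges_of_isBridge he hb
      (hbridge _ ⟨hxy, hb⟩)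

/-- There exists a non-separating path from `S` to `T` if and only if `S`
and `T` are not separated by a bridge. -/
theorem exists_nonSeparating_path_iff_not_bridge_separated
    {V : Type*} [Fintype V] (G : SimpleGraph V)
    (hconn : G.Connected) (hchordal : Chordal G) (S T : V) (hST : S ≠ T) :
    (∃ p : List V, IsPathSeq G p ∧ p.head? = some S ∧ p.getLast? = some T ∧
      ¬ SeparatingPath G p) ↔
    (∀ e : Sym2 V, (e ∈ G.edgeSet ∧ G.IsBridge e) → (G.deleteEdges {e}).Reachable S T) :=
  exists_nonSeparating_path_iff_not_bridge_separated_general G hconn hchordal S T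

end NSP
end

section
/- If D is a minimal separating set of edges of G (D is separating but no proper subset of D is separating), then the graph obtained from G by deleting the edges of D has exactly two connected components, and the subgraph of G formed by the edges of D together with their endpoints is connected. -/
/-!
Fix an edge `uv ∈ D`. By minimality `G - (D \ {uv})` is connected, so in `G - D` every vertex
reaches `u` or `v`, and `u`, `v` are not joined (else `G - D` would be connected): `G - D` has
exactly the two components `A ∋ u` and `B ∋ v`, and every edge of `D` runs between them.

For edges `a₁b₁`, `a₂b₂` of `D`, shortest paths `a₁ ⇝ a₂` in `A` and `b₂ ⇝ b₁` in `B` close up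
to a cycle of `G`. A shortest path has no chord, so a chord of this cycle joins the two paths; it
is then an edge `xy` of `D` that splits the cycle into two shorter cycles of the same shape, through
`a₁b₁, xy` and `xy, a₂b₂`. Induction on the total length connects `a₁` to `a₂` by edges of `D`.
-/

open SimpleGraph

namespace SimpleGraph

variable {V : Type*} {G : SimpleGraph V}

theorem Walk.isChordless_of_length_eq_dist {u v : V} {p : G.Walk u v}
    (hp : p.length = G.dist u v) : p.IsChordless := by
  refine isChordless_iff_forall_mem_edges.mpr fun x y hx hy hxy => ?_
  obtain ⟨i, rfl, hi⟩ := mem_support_iff_exists_getVert.mp hx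
  obtain ⟨j, rfl, hj⟩ := mem_support_iff_exists_getVert.mp hy
  clear hx hy
  wlog hij : i < j generalizing i j
  · have hji : j < i := lt_of_le_of_ne (not_lt.mp hij) fun h => hxy.ne (h ▸ rfl)
    rw [Sym2.eq_swap]
    exact this j hj i hi hxy.symm hji
  have hshort := dist_le ((p.take i).append (cons hxy (p.drop j)))
  simp only [length_append, length_cons, take_length, drop_length] at hshort
  exact (mk_mem_edges_iff_exists p).mpr ⟨i, by omega, by rw [show j = i + 1 by omega]⟩

theorem Walk.length_takeUntil_add_length_dropUntil_lt [DecidableEq V] {a b c d x y : V}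
    {p : G.Walk a b} {q : G.Walk c d} (hx : x ∈ p.support) (hy : y ∈ q.support)
    (h : x ≠ b ∨ y ≠ c) :
    (p.takeUntil x hx).length + (q.dropUntil y hy).length < p.length + q.length := by
  rcases h with h | h
  · have := length_takeUntil_lt_length hx h
    have := q.length_dropUntil_le_length hy
    omega
  · have := p.length_takeUntil_le_length hx
    have := length_dropUntil_lt_length hy h
    omega

theorem Walk.IsPath.isCycle_cons_append_cons {a₁ a₂ b₁ b₂ : V} {P : G.Walk a₁ a₂}
    {Q : G.Walk b₂ b₁} (hP : P.IsPath) (hQ : Q.IsPath) (hPQ : P.support.Disjoint Q.support)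
    (h₁ : G.Adj b₁ a₁) (h₂ : G.Adj a₂ b₂) (ha : a₁ ≠ a₂) :
    ((cons h₁ P).append (cons h₂ Q)).IsCycle := by
  refine IsPath.isCycle_append ?_ ?_ ?_ (.inl ?_)
  · exact (cons_isPath_iff _ _).mpr ⟨hP, fun h => hPQ h Q.end_mem_support⟩
  · exact (cons_isPath_iff _ _).mpr ⟨hQ, hPQ P.end_mem_support⟩
  · simpa only [support_cons, List.tail_cons] using hPQ
  · have : P.length ≠ 0 := fun h => ha (P.eq_of_length_eq_zero h)
    rw [length_cons]
    omega

theorem Connected.reachable_or_reachable_deleteEdges_singleton (hG : G.Connected) (u v w : V) :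
    (G.deleteEdges {s(u, v)}).Reachable w u ∨ (G.deleteEdges {s(u, v)}).Reachable w v := by
  classical
  obtain ⟨P, hP⟩ := hG.exists_isPath w u
  by_cases huvP : s(u, v) ∈ P.edges
  · have hvP := P.snd_mem_support_of_mem_edges huvP
    have huP₁ := Walk.endpoint_notMem_support_takeUntil hP hvP (P.adj_of_mem_edges huvP).ne
    refine .inr ⟨(P.takeUntil v hvP).toDeleteEdges _ fun e he heq => ?_⟩
    rw [Set.mem_singleton_iff] at heq
    subst heq
    exact huP₁ ((P.takeUntil v hvP).fst_mem_support_of_mem_edges he)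
  · refine .inl ⟨P.toDeleteEdges _ fun e he heq => ?_⟩
    rw [Set.mem_singleton_iff] at heq
    exact huvP (heq ▸ he)

theorem Subgraph.reachable_coe_of_reachable_spanningCoe {H : G.Subgraph} {u v : V}
    (h : H.spanningCoe.Reachable u v) (hu : u ∈ H.verts) (hv : v ∈ H.verts) :
    H.coe.Reachable ⟨u, hu⟩ ⟨v, hv⟩ := by
  obtain ⟨p⟩ := h
  induction p with
  | nil => rfl
  | cons hadj _ ih =>
    exact (Adj.reachable (show H.Adj _ _ from hadj)).trans (ih (H.edge_vert hadj.symm) hv)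

end SimpleGraph

namespace NSP

variable {V : Type*}

section

variable {G : SimpleGraph V} {D : Set (Sym2 V)} {u v : V}

theorem connected_deleteEdges_sdiff_singleton (hmin : ∀ D' ⊂ D, ¬ Separating G D')
    {e : Sym2 V} (he : e ∈ D) : (G.deleteEdges (D \ {e})).Connected :=
  not_not.mp (hmin _ (Set.sdiff_singleton_ssubset.mpr he))

theorem reachable_or_reachable_of_minimal (hmin : ∀ D' ⊂ D, ¬ Separating G D')
    (huv : s(u, v) ∈ D) (w : V) :
    (G.deleteEdges D).Reachable w u ∨ (G.deleteEdges D).Reachable w v := by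
  have h := (connected_deleteEdges_sdiff_singleton hmin huv)
    |>.reachable_or_reachable_deleteEdges_singleton u v w
  rwa [deleteEdges_deleteEdges, Set.sdiff_union_self,
    Set.union_eq_left.mpr (Set.singleton_subset_iff.mpr huv)] at h

theorem not_reachable_of_minimal (hsep : Separating G D) (hmin : ∀ D' ⊂ D, ¬ Separating G D')
    (huv : s(u, v) ∈ D) : ¬ (G.deleteEdges D).Reachable u v := fun h =>
  hsep <| (connected_iff_exists_forall_reachable _).mpr ⟨u, fun w =>
    (reachable_or_reachable_of_minimal hmin huv w).elim Reachable.symm fun hw => h.trans hw.symm⟩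

theorem edgeSubgraph_spanningCoe_adj_of_mem (hDE : D ⊆ G.edgeSet) (huv : s(u, v) ∈ D) :
    (edgeSubgraph G D).spanningCoe.Adj u v :=
  ⟨huv, G.mem_edgeSet.mp (hDE huv)⟩

theorem mem_edgeSubgraph_verts_of_mem (hDE : D ⊆ G.edgeSet) (huv : s(u, v) ∈ D) :
    u ∈ (edgeSubgraph G D).verts :=
  ⟨s(u, v), ⟨huv, hDE huv⟩, Sym2.mem_mk_left u v⟩

section Crossing

variable (hD : ∀ ⦃a b⦄, s(a, b) ∈ D → ¬ (G.deleteEdges D).Reachable a b)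
include hD

theorem mem_edges_of_length_eq_dist {a b x y : V} {p : (G.deleteEdges D).Walk a b}
    (hp : p.length = (G.deleteEdges D).dist a b) (hx : x ∈ p.support) (hy : y ∈ p.support)
    (hxy : G.Adj x y) : s(x, y) ∈ p.edges := by
  classical
  refine (p.isChordless_of_length_eq_dist hp).mem_edges hx hy <| deleteEdges_adj.mpr ⟨hxy, ?_⟩
  exact fun h => hD h ((p.takeUntil x hx).reachable.symm.trans (p.takeUntil y hy).reachable)

theorem exists_crossing_chord (hG : Chordal G) (hDE : D ⊆ G.edgeSet) {a₁ b₁ a₂ b₂ : V}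
    (h₁ : s(a₁, b₁) ∈ D) (h₂ : s(a₂, b₂) ∈ D) {P : (G.deleteEdges D).Walk a₁ a₂}
    {Q : (G.deleteEdges D).Walk b₂ b₁} (hP : P.length = (G.deleteEdges D).dist a₁ a₂)
    (hQ : Q.length = (G.deleteEdges D).dist b₂ b₁) (ha : a₁ ≠ a₂) (hb : b₂ ≠ b₁) :
    ∃ x ∈ P.support, ∃ y ∈ Q.support,
      s(x, y) ∈ D ∧ (x ≠ a₁ ∨ y ≠ b₁) ∧ (x ≠ a₂ ∨ y ≠ b₂) := by
  classical
  have hle := G.deleteEdges_le D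
  have hsideP : ∀ x ∈ P.support, (G.deleteEdges D).Reachable a₁ x :=
    fun x hx => (P.takeUntil x hx).reachable
  have hsideQ : ∀ y ∈ Q.support, (G.deleteEdges D).Reachable y b₁ :=
    fun y hy => (Q.dropUntil y hy).reachable
  have hPQ : P.support.Disjoint Q.support :=
    fun x hx hx' => hD h₁ ((hsideP x hx).trans (hsideQ x hx'))
  let c : G.Walk b₁ b₁ := (Walk.cons (G.mem_edgeSet.mp (hDE h₁)).symm (P.mapLe hle)).append
    (Walk.cons (G.mem_edgeSet.mp (hDE h₂)) (Q.mapLe hle))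
  have hc : c.IsCycle := by
    refine Walk.IsPath.isCycle_cons_append_cons ((P.isPath_of_length_eq_dist hP).mapLe hle)
      ((Q.isPath_of_length_eq_dist hQ).mapLe hle) ?_ _ _ ha
    simpa only [Walk.support_mapLe_eq_support] using hPQ
  have hlen : 4 ≤ c.length := by
    have : P.length ≠ 0 := fun h => ha (P.eq_of_length_eq_zero h)
    have : Q.length ≠ 0 := fun h => hb (Q.eq_of_length_eq_zero h)
    simp only [c, Walk.length_append, Walk.length_cons, Walk.length_mapLe]
    omega
  have hedges : c.edges = s(b₁, a₁) :: (P.edges ++ s(a₂, b₂) :: Q.edges) := by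
    simp only [c, Walk.edges_append, Walk.edges_cons, Walk.edges_mapLe_eq_edges, List.cons_append]
  have hmem : ∀ z ∈ c.support, z ∈ P.support ∨ z ∈ Q.support := by
    simp only [c, Walk.support_append, Walk.support_cons, Walk.support_mapLe_eq_support,
      List.tail_cons, List.mem_cons, List.mem_append]
    rintro z ((rfl | hz) | hz)
    · exact .inr Q.end_mem_support
    · exact .inl hz
    · exact .inr hz
  have hchord : ∃ x ∈ P.support, ∃ y ∈ Q.support, G.Adj x y ∧ s(x, y) ∉ c.edges := by
    obtain ⟨x, y, hx, hy, hxy, hxyc⟩ := hG c hc hlen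
    rcases hmem x hx with hxP | hxQ <;> rcases hmem y hy with hyP | hyQ
    · exact absurd (by simp [hedges, mem_edges_of_length_eq_dist hD hP hxP hyP hxy]) hxyc
    · exact ⟨x, hxP, y, hyQ, hxy, hxyc⟩
    · exact ⟨y, hyP, x, hxQ, hxy.symm, by rwa [Sym2.eq_swap]⟩
    · exact absurd (by simp [hedges, mem_edges_of_length_eq_dist hD hQ hxQ hyQ hxy]) hxyc
  obtain ⟨x, hx, y, hy, hxy, hxyc⟩ := hchord
  refine ⟨x, hx, y, hy, ?_, ?_, ?_⟩
  · by_contra hnD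
    exact hD h₁ ((hsideP x hx).trans ((deleteEdges_adj.mpr ⟨hxy, hnD⟩).reachable.trans
      (hsideQ y hy)))
  all_goals
    by_contra! h
    obtain ⟨rfl, rfl⟩ := h
    simp [hedges, Sym2.eq_swap] at hxyc

theorem reachable_edgeSubgraph_of_reachable (hG : Chordal G) (hDE : D ⊆ G.edgeSet)
    {a₁ b₁ a₂ b₂ : V} (h₁ : s(a₁, b₁) ∈ D) (h₂ : s(a₂, b₂) ∈ D)
    (ha : (G.deleteEdges D).Reachable a₁ a₂) (hb : (G.deleteEdges D).Reachable b₂ b₁) :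
    (edgeSubgraph G D).spanningCoe.Reachable a₁ a₂ := by
  classical
  induction hn : (G.deleteEdges D).dist a₁ a₂ + (G.deleteEdges D).dist b₂ b₁
    using Nat.strong_induction_on generalizing a₁ b₁ a₂ b₂ with
  | _ n ih =>
  obtain rfl | ha' := eq_or_ne a₁ a₂
  · rfl
  obtain rfl | hb' := eq_or_ne b₂ b₁
  · exact (edgeSubgraph_spanningCoe_adj_of_mem hDE h₁).reachable.trans
      (edgeSubgraph_spanningCoe_adj_of_mem hDE h₂).symm.reachable
  obtain ⟨P, hP⟩ := ha.exists_walk_length_eq_dist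
  obtain ⟨Q, hQ⟩ := hb.exists_walk_length_eq_dist
  obtain ⟨x, hx, y, hy, hxy, hne₁, hne₂⟩ := exists_crossing_chord hD hG hDE h₁ h₂ hP hQ ha' hb'
  have hlt₁ := Walk.length_takeUntil_add_length_dropUntil_lt hx hy hne₂
  have hlt₂ := Walk.length_takeUntil_add_length_dropUntil_lt hy hx hne₁.symm
  have := dist_le (P.takeUntil x hx)
  have := dist_le (Q.dropUntil y hy)
  have := dist_le (P.dropUntil x hx)
  have := dist_le (Q.takeUntil y hy)
  exact (ih _ (by omega) h₁ hxy (P.takeUntil x hx).reachable (Q.dropUntil y hy).reachable rfl).trans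
    (ih _ (by omega) hxy h₂ (P.dropUntil x hx).reachable (Q.takeUntil y hy).reachable rfl)

end Crossing

theorem reachable_edgeSubgraph_of_mem (hG : Chordal G) (hDE : D ⊆ G.edgeSet)
    (hsep : Separating G D) (hmin : ∀ D' ⊂ D, ¬ Separating G D') {x y : V}
    (huv : s(u, v) ∈ D) (hxy : s(x, y) ∈ D) : (edgeSubgraph G D).spanningCoe.Reachable u x := by
  have hD : ∀ ⦃a b⦄, s(a, b) ∈ D → ¬ (G.deleteEdges D).Reachable a b :=
    fun _ _ h => not_reachable_of_minimal hsep hmin h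
  have hyx : s(y, x) ∈ D := by rwa [Sym2.eq_swap]
  rcases reachable_or_reachable_of_minimal hmin huv x with hxu | hxv <;>
    rcases reachable_or_reachable_of_minimal hmin huv y with hyu | hyv
  · exact absurd (hxu.trans hyu.symm) (hD hxy)
  · exact reachable_edgeSubgraph_of_reachable hD hG hDE huv hxy hxu.symm hyv
  · exact (reachable_edgeSubgraph_of_reachable hD hG hDE huv hyx hyu.symm hxv).trans
      (edgeSubgraph_spanningCoe_adj_of_mem hDE hyx).reachable
  · exact absurd (hxv.trans hyv.symm) (hD hxy)

end

theorem minimal_separating_set_two_components_and_connected_general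
    {V : Type*} (G : SimpleGraph V)
    (hconn : G.Connected) (hchordal : Chordal G)
    (D : Set (Sym2 V)) (hDE : D ⊆ G.edgeSet)
    (hsep : Separating G D) (hmin : ∀ D' ⊂ D, ¬ Separating G D') :
    (∃ c₁ c₂ : (G.deleteEdges D).ConnectedComponent, c₁ ≠ c₂ ∧
      ∀ c : (G.deleteEdges D).ConnectedComponent, c = c₁ ∨ c = c₂) ∧
    (edgeSubgraph G D).Connected := by
  obtain ⟨u, v, huv⟩ : ∃ u v, s(u, v) ∈ D := by
    obtain ⟨e, he⟩ := Set.nonempty_iff_ne_empty.mpr fun h : D = ∅ =>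
      hsep (by rwa [h, deleteEdges_empty])
    induction e using Sym2.ind with | _ u v => exact ⟨u, v, he⟩
  have hu := mem_edgeSubgraph_verts_of_mem hDE huv
  refine ⟨⟨_, _, fun h => not_reachable_of_minimal hsep hmin huv (ConnectedComponent.exact h),
    fun c => c.ind fun w => (reachable_or_reachable_of_minimal hmin huv w).imp
      ConnectedComponent.sound ConnectedComponent.sound⟩, ?_⟩
  suffices h : ∀ x (hx : x ∈ (edgeSubgraph G D).verts),
      (edgeSubgraph G D).coe.Reachable ⟨u, hu⟩ ⟨x, hx⟩ from
    Subgraph.connected_iff.mpr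
      ⟨Subgraph.preconnected_iff.mpr fun x y => (h x.1 x.2).symm.trans (h y.1 y.2), ⟨u, hu⟩⟩
  rintro x ⟨e, ⟨he, -⟩, hxe⟩
  obtain ⟨y, rfl⟩ := Sym2.mem_iff_exists.mp hxe
  exact Subgraph.reachable_coe_of_reachable_spanningCoe
    (reachable_edgeSubgraph_of_mem hchordal hDE hsep hmin huv he) _ _

/-- A minimal separating set of edges `D` leaves exactly two connected
components after deletion, and the subgraph formed by `D` together with the
endpoints of its edges is connected. -/
theorem minimal_separating_set_two_components_and_connected
    {V : Type*} [Fintype V] (G : SimpleGraph V)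
    (hconn : G.Connected) (hchordal : Chordal G)
    (D : Set (Sym2 V)) (hDE : D ⊆ G.edgeSet)
    (hsep : Separating G D) (hmin : ∀ D' ⊂ D, ¬ Separating G D') :
    (∃ c₁ c₂ : (G.deleteEdges D).ConnectedComponent, c₁ ≠ c₂ ∧
      ∀ c : (G.deleteEdges D).ConnectedComponent, c = c₁ ∨ c = c₂) ∧
    (edgeSubgraph G D).Connected :=
  minimal_separating_set_two_components_and_connected_general G hconn hchordal D hDE hsep hmin

end NSP
end

section
/- Let r be a separator path in G. For every index i with 0 ≤ i < |r|−2, the vertices r_i and r_{i+2} are adjacent in G. -/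
/-!
Let `H` be `G` with the edges of `r` deleted. Minimality of `r` makes `G` minus all edges of `r`
but the first (or but the last) connected, so `H` has exactly two components, one containing `r₀`
and the other `r₁`, and `r_{n-2}`, `r_{n-1}` are separated as well. In a chordal graph every edge
`ab` of a cycle spans a triangle with a third vertex of the cycle; when `a` and `b` lie in
different components of `H`, one side of that triangle crosses between the components, hence is
an edge of `r`, so the third vertex is a neighbour of `a` or `b` along `r`. For a cycle through
`r_t r_{t+1}` that first follows `r` forward, this shows by induction on `t` that consecutive
vertices of `r` lie in different components. Then `r_i` and `r_{i+2}` lie in the same component,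
and the triangle over `r_i r_{i+1}` in the cycle `r_i r_{i+1} r_{i+2}`, closed up inside that
component, is the chord `r_i r_{i+2}`.
-/

open SimpleGraph

theorem Nat.exists_forall_not_and_succ {P : ℕ → Prop} {a b : ℕ} (ha : ¬P a) (hb : P b)
    (hab : a ≤ b) :
    ∃ l, a ≤ l ∧ l < b ∧ (∀ s, a ≤ s → s ≤ l → ¬P s) ∧ P (l + 1) := by
  classical
  have hex : ∃ k, P (a + k) := ⟨b - a, by rwa [Nat.add_sub_cancel' hab]⟩
  have hk : P (a + Nat.find hex) := Nat.find_spec hex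
  have hk0 : Nat.find hex ≠ 0 := fun h0 => ha (by simpa [h0] using hk)
  have hkb : Nat.find hex ≤ b - a := Nat.find_min' hex (by rwa [Nat.add_sub_cancel' hab])
  refine ⟨a + Nat.find hex - 1, by omega, by omega, fun s has hsl hs => ?_, ?_⟩
  · exact Nat.find_min hex (m := s - a) (by omega) (by rwa [Nat.add_sub_cancel' has])
  · rwa [Nat.sub_add_cancel (by omega)]

namespace SimpleGraph

variable {V : Type*} {G H : SimpleGraph V} {u v w x y : V}

theorem Reachable.exists_isPath_forall_reachable (hHG : H ≤ G) (h : H.Reachable x y) :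
    ∃ p : G.Walk x y, p.IsPath ∧ ∀ z ∈ p.support, H.Reachable z y := by
  classical
  obtain ⟨q⟩ := h
  refine ⟨q.bypass.mapLe hHG, (Walk.isPath_mapLe hHG).2 q.bypass_isPath, fun z hz => ?_⟩
  rw [Walk.support_mapLe_eq_support] at hz
  exact ⟨q.bypass.dropUntil z hz⟩

theorem reachable_or_reachable_of_connected_deleteEdges {D D' : Set (Sym2 V)}
    (hD' : (G.deleteEdges D').Connected) (hD : D ⊆ insert s(x, y) D') (v : V) :
    (G.deleteEdges D).Reachable v x ∨ (G.deleteEdges D).Reachable v y := by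
  obtain ⟨p⟩ := hD'.preconnected v x
  induction p with
  | nil => exact Or.inl .rfl
  | @cons a b _ hab _ ih =>
    obtain ⟨hab, habD'⟩ := deleteEdges_adj.1 hab
    by_cases habD : s(a, b) ∈ D
    · rcases Sym2.eq_iff.1 ((Set.mem_insert_iff.1 (hD habD)).resolve_right habD')
        with ⟨rfl, -⟩ | ⟨rfl, -⟩
      · exact Or.inl .rfl
      · exact Or.inr .rfl
    · have hab' : (G.deleteEdges D).Reachable a b := (deleteEdges_adj.2 ⟨hab, habD⟩).reachable
      exact (ih hD).imp hab'.trans hab'.trans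

theorem not_reachable_of_forall_reachable_or_reachable (hH : ¬H.Connected)
    (h : ∀ v, H.Reachable v x ∨ H.Reachable v y) : ¬H.Reachable x y := by
  refine fun hxy => hH (haveI : Nonempty V := ⟨x⟩; ⟨fun u v => ?_⟩)
  have hx : ∀ v, H.Reachable v x := fun v => (h v).elim id (·.trans hxy.symm)
  exact (hx u).trans (hx v).symm

theorem reachable_of_not_reachable_of_not_reachable (h : ∀ v, H.Reachable v x ∨ H.Reachable v y)
    (huv : ¬H.Reachable u v) (huw : ¬H.Reachable u w) : H.Reachable v w := by
  rcases h u with hu | hu <;> rcases h v with hv | hv <;> rcases h w with hw | hw <;>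
    first
    | exact hv.trans hw.symm
    | exact absurd (hu.trans hv.symm) huv
    | exact absurd (hu.trans hw.symm) huw

namespace Walk

theorem two_le_length_of_ne_of_notMem_edges (p : G.Walk u v) (huv : u ≠ v)
    (h : s(u, v) ∉ p.edges) : 2 ≤ p.length := by
  cases p with
  | nil => exact absurd rfl huv
  | cons _ q =>
    cases q with
    | nil => simp at h
    | cons _ _ => simp

theorem exists_length_lt_of_adj_start [DecidableEq V] (p : G.Walk u v) (hw : w ∈ p.support)
    (huw : G.Adj u w) (h : s(u, w) ∉ p.edges) :
    ∃ q : G.Walk u v, q.length < p.length ∧ q.support ⊆ p.support ∧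
      q.edges ⊆ s(u, w) :: p.edges := by
  have htake : 2 ≤ (p.takeUntil w hw).length :=
    two_le_length_of_ne_of_notMem_edges _ huw.ne
      fun hm => h (p.edges_takeUntil_subset_edges hw hm)
  have hlen := congrArg Walk.length (p.take_spec hw)
  rw [length_append] at hlen
  refine ⟨cons huw (p.dropUntil w hw), by simp; omega, ?_, ?_⟩
  · simp only [support_cons, List.cons_subset]
    exact ⟨p.start_mem_support, p.support_dropUntil_subset_support hw⟩
  · simp only [edges_cons]
    exact List.cons_subset_cons _ (p.edges_dropUntil_subset_edges hw)

theorem exists_length_lt_of_isChord [DecidableEq V] (p : G.Walk x y) (h : p.IsChord s(u, w)) :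
    ∃ q : G.Walk x y, q.length < p.length ∧ q.support ⊆ p.support ∧
      q.edges ⊆ s(u, w) :: p.edges := by
  induction p with
  | nil =>
    obtain ⟨huw, -, hu, hw⟩ := isChord_sym2Mk.1 h
    simp_all
  | @cons x x' y hxx' p ih =>
    obtain ⟨huw, he, hu, hw⟩ := isChord_sym2Mk.1 h
    by_cases hux : u = x
    · subst hux
      exact exists_length_lt_of_adj_start _ hw huw he
    by_cases hwx : w = x
    · subst hwx
      rw [Sym2.eq_swap] at he ⊢
      exact exists_length_lt_of_adj_start _ hu huw.symm he
    have hu' : u ∈ p.support := (List.mem_cons.1 hu).resolve_left hux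
    have hw' : w ∈ p.support := (List.mem_cons.1 hw).resolve_left hwx
    obtain ⟨q, hql, hqs, hqe⟩ :=
      ih (isChord_sym2Mk.2 ⟨huw, fun hm => he (by simp [hm]), hu', hw'⟩)
    refine ⟨cons hxx' q, by simpa using hql, ?_, ?_⟩
    · simpa using List.cons_subset_cons _ hqs
    · intro e he'
      simp only [edges_cons, List.mem_cons] at he' ⊢
      grind

end Walk

end SimpleGraph

namespace NSP

variable {V : Type*} {G : SimpleGraph V}

theorem Chordal.exists_adj_adj_of_isPath (hG : Chordal G) {a b : V} (hab : G.Adj a b)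
    {p : G.Walk b a} (hp : p.IsPath) (h2 : 2 ≤ p.length) :
    ∃ v ∈ p.support, G.Adj a v ∧ G.Adj b v := by
  classical
  induction hn : p.length using Nat.strong_induction_on generalizing p with
  | _ n ih =>
    have hba : s(b, a) ∉ p.edges := fun hm => by
      have := hp.length_eq_one_of_mem_edges hm
      omega
    rcases h2.eq_or_lt with h2 | h3
    · refine ⟨p.getVert 1, p.getVert_mem_support 1, ?_, ?_⟩
      · have h12 := (p.adj_getVert_succ (i := 1) (by omega)).symm
        rwa [show 1 + 1 = p.length by omega, Walk.getVert_length] at h12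
      · simpa using p.adj_getVert_succ (i := 0) (by omega)
    have hcycle : (Walk.cons hab p).IsCycle :=
      (Walk.cons_isCycle_iff p hab).2 ⟨hp, by rwa [Sym2.eq_swap]⟩
    obtain ⟨u, w, hu, hw, huw, hnot⟩ := hG _ hcycle (by simp; omega)
    have hsupp : ∀ z ∈ (Walk.cons hab p).support, z ∈ p.support := by
      simp [p.end_mem_support]
    have hne : s(u, w) ≠ s(b, a) := fun he => hnot (by simp [he, Sym2.eq_swap])
    obtain ⟨q, hql, hqs, hqe⟩ := p.exists_length_lt_of_isChord
      (Walk.isChord_sym2Mk.2 ⟨huw, fun hm => hnot (by simp [hm]), hsupp u hu, hsupp w hw⟩)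
    have hq2 : 2 ≤ q.bypass.length :=
      q.bypass.two_le_length_of_ne_of_notMem_edges hab.ne.symm fun hm =>
        (List.mem_cons.1 (hqe (q.edges_bypass_subset_edges hm))).elim (hne ·.symm) hba
    obtain ⟨v, hv, hav, hbv⟩ := ih _ (hn ▸ (q.length_bypass_le_length.trans_lt hql))
      q.bypass_isPath hq2 rfl
    exact ⟨v, hqs (q.support_bypass_subset_support hv), hav, hbv⟩

section Lists

variable {r : List V} {i j : ℕ}

theorem length_subseq (hj : j < r.length) : (subseq r i j).length = j + 1 - i := by
  simp [subseq]
  omega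

theorem getElem_subseq {k : ℕ} (hk : k < (subseq r i j).length) :
    (subseq r i j)[k] = r[i + k]'(by simp [subseq] at hk; omega) := by
  simp [subseq]

theorem exists_getElem_eq_of_mem_subseq {z : V} (hz : z ∈ subseq r i j) :
    ∃ (s : ℕ) (hs : s < r.length), i ≤ s ∧ s ≤ j ∧ r[s] = z := by
  obtain ⟨k, hk, rfl⟩ := List.mem_iff_getElem.1 hz
  have hk' := hk
  simp only [subseq, List.length_drop, List.length_take] at hk'
  exact ⟨i + k, by omega, by omega, by omega, (getElem_subseq hk).symm⟩

theorem getElem_mem_edgesOf_subseq {k : ℕ} (hik : i ≤ k) (hkj : k + 1 ≤ j)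
    (hj : j < r.length) :
    s(r[k], r[k + 1]) ∈ edgesOf (subseq r i j) := by
  refine ⟨k - i, by rw [length_subseq hj]; omega, ?_⟩
  simp only [List.get_eq_getElem, getElem_subseq]
  congr 2 <;> omega

theorem exists_walk_support_eq_subseq (hch : r.IsChain G.Adj) (hij : i ≤ j) (hj : j < r.length) :
    ∃ p : G.Walk r[i] r[j], p.support = subseq r i j := by
  have hlen := length_subseq (i := i) hj
  have hne : subseq r i j ≠ [] := List.ne_nil_of_length_pos (by omega)
  have hchain : (subseq r i j).IsChain G.Adj := (hch.take _).drop _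
  refine ⟨(Walk.ofSupport _ hne hchain).copy ?_ ?_, by
    rw [Walk.support_copy, Walk.support_ofSupport]⟩
  · rw [List.head_eq_getElem, getElem_subseq]
    rfl
  · rw [List.getLast_eq_getElem, getElem_subseq]
    congr 1
    omega

theorem exists_getElem_eq_of_adj_of_not_reachable (hnd : r.Nodup) {x : V} {k : ℕ}
    (hk : k < r.length) (hadj : G.Adj x r[k])
    (hx : ¬(G.deleteEdges (edgesOf r)).Reachable x r[k]) :
    ∃ (j : ℕ) (hj : j < r.length), r[j] = x ∧ (j + 1 = k ∨ j = k + 1) := by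
  have hmem : s(x, r[k]) ∈ edgesOf r := by
    by_contra hnot
    exact hx (deleteEdges_adj.2 ⟨hadj, hnot⟩).reachable
  obtain ⟨j, hj, he⟩ := hmem
  simp only [List.get_eq_getElem] at he
  rcases Sym2.eq_iff.1 he with ⟨rfl, hkj⟩ | ⟨rfl, hkj⟩
  · exact ⟨j, by omega, rfl, Or.inl ((hnd.getElem_inj_iff.1 hkj).symm)⟩
  · exact ⟨j + 1, hj, rfl, Or.inr (by rw [hnd.getElem_inj_iff.1 hkj])⟩

end Lists

namespace SeparatorPath

variable {r : List V} (hr : SeparatorPath G r)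
include hr

theorem connected_deleteEdges_subseq {i j : ℕ} (hij : i ≤ j) (hj : j < r.length)
    (hlt : j + 1 - i < r.length) : (G.deleteEdges (edgesOf (subseq r i j))).Connected := by
  refine not_not.1 (hr.2.2 _ ⟨i, j, hij, hj, rfl⟩ fun heq => ?_)
  have := congrArg List.length heq
  rw [length_subseq hj] at this
  omega

theorem reachable_or_reachable_head (h : 1 < r.length) (v : V) :
    (G.deleteEdges (edgesOf r)).Reachable v r[0] ∨
      (G.deleteEdges (edgesOf r)).Reachable v r[1] := by
  refine reachable_or_reachable_of_connected_deleteEdges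
    (hr.connected_deleteEdges_subseq (i := 1) (j := r.length - 1) (by omega) (by omega)
      (by omega)) ?_ v
  rintro _ ⟨k, hk, rfl⟩
  rcases k with _ | k
  · exact Set.mem_insert _ _
  · exact Set.mem_insert_of_mem _ (getElem_mem_edgesOf_subseq (by omega) (by omega) (by omega))

theorem reachable_or_reachable_last (h : 1 < r.length) (v : V) :
    (G.deleteEdges (edgesOf r)).Reachable v r[r.length - 2] ∨
      (G.deleteEdges (edgesOf r)).Reachable v r[r.length - 1] := by
  refine reachable_or_reachable_of_connected_deleteEdges
    (hr.connected_deleteEdges_subseq (i := 0) (j := r.length - 2) (by omega) (by omega)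
      (by omega)) ?_ v
  rintro _ ⟨k, hk, rfl⟩
  by_cases hkl : k + 2 = r.length
  · simp only [List.get_eq_getElem]
    convert Set.mem_insert _ _ using 3 <;> omega
  · exact Set.mem_insert_of_mem _ (getElem_mem_edgesOf_subseq (by omega) (by omega) (by omega))

theorem exists_isPath_of_reachable_succ_succ {t : ℕ} (ht : t + 2 < r.length)
    (hcross : ¬(G.deleteEdges (edgesOf r)).Reachable r[t] r[t + 1])
    (hsame : (G.deleteEdges (edgesOf r)).Reachable r[t + 1] r[t + 2]) :
    ∃ W : G.Walk r[t + 1] r[t], W.IsPath ∧ 2 ≤ W.length ∧ ∀ z ∈ W.support,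
      (G.deleteEdges (edgesOf r)).Reachable z r[t] ∨
        ∃ (s : ℕ) (hs : s < r.length), t < s ∧ r[s] = z := by
  set H := G.deleteEdges (edgesOf r)
  have hm : ∃ (m : ℕ) (hm : m < r.length), t + 1 ≤ m ∧ H.Reachable r[m] r[t] := by
    by_contra! hno
    have h₁' := hno (r.length - 2) (by omega) (by omega)
    have h₂' := hno (r.length - 1) (by omega) (by omega)
    exact not_reachable_of_forall_reachable_or_reachable hr.2.1 (hr.reachable_or_reachable_last
      (by omega)) (reachable_of_not_reachable_of_not_reachable
        (hr.reachable_or_reachable_head (by omega)) (u := r[t]) (h₁' ·.symm) (h₂' ·.symm))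
  obtain ⟨m, hm, htm, hmt⟩ := hm
  -- `r[l + 1]` is the first vertex after `r[t + 1]` on the side of `r[t]`
  obtain ⟨l, htl, hlm, hX, hY⟩ := Nat.exists_forall_not_and_succ
    (P := fun s => ∀ hs : s < r.length, H.Reachable r[s] r[t])
    (fun h => hcross (h (by omega)).symm) (fun _ => hmt) htm
  have hl : l + 1 < r.length := by omega
  have htl' : t + 1 < l := by
    by_contra htl'
    obtain rfl : l = t + 1 := by omega
    exact hcross ((hY hl).symm.trans hsame.symm)
  obtain ⟨Px, hPx⟩ := exists_walk_support_eq_subseq hr.1.1.2 htl (by omega)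
  obtain ⟨Py, hPy, hPyY⟩ := (hY hl).exists_isPath_forall_reachable (deleteEdges_le _)
  have hPxX : ∀ z ∈ Px.support,
      ∃ (s : ℕ) (hs : s < r.length), t + 1 ≤ s ∧ s ≤ l ∧ r[s] = z :=
    fun z hz => exists_getElem_eq_of_mem_subseq (hPx ▸ hz)
  set W := Px.append (.cons (hr.1.1.2.getElem l hl) Py)
  have hsupp : W.support = Px.support ++ Py.support := by
    simp [W, Walk.support_append]
  refine ⟨W, ?_, ?_, fun z hz => ?_⟩
  · rw [Walk.isPath_def, hsupp, List.nodup_append]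
    refine ⟨hPx ▸ ((List.drop_sublist _ _).trans (List.take_sublist _ _)).nodup hr.1.2,
      hPy.support_nodup, fun z hzx z' hzy hzz => ?_⟩
    obtain ⟨s, hs, hts, hsl, rfl⟩ := hPxX z hzx
    exact hX s hts hsl fun _ => hzz ▸ hPyY z' hzy
  · have := congrArg List.length hPx
    rw [Walk.length_support, length_subseq (by omega)] at this
    simp only [W, Walk.length_append, Walk.length_cons]
    omega
  · rw [hsupp, List.mem_append] at hz
    rcases hz with hz | hz
    · obtain ⟨s, hs, hts, -, rfl⟩ := hPxX z hz
      exact Or.inr ⟨s, hs, by omega, rfl⟩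
    · exact Or.inl (hPyY z hz)

theorem not_reachable_succ_succ (hG : Chordal G) {t : ℕ} (ht : t + 2 < r.length)
    (hcross : ¬(G.deleteEdges (edgesOf r)).Reachable r[t] r[t + 1]) :
    ¬(G.deleteEdges (edgesOf r)).Reachable r[t + 1] r[t + 2] := by
  intro hsame
  obtain ⟨W, hW, hW2, hWsupp⟩ := hr.exists_isPath_of_reachable_succ_succ ht hcross hsame
  obtain ⟨v, hv, hvt, hvt₁⟩ :=
    hG.exists_adj_adj_of_isPath (hr.1.1.2.getElem t (by omega)) hW hW2
  by_cases hvY : (G.deleteEdges (edgesOf r)).Reachable v r[t]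
  · obtain ⟨j, hj, rfl, hjt | rfl⟩ := exists_getElem_eq_of_adj_of_not_reachable hr.1.2
      (k := t + 1) (by omega) hvt₁.symm fun h => hcross (hvY.symm.trans h)
    · obtain rfl : j = t := by omega
      exact hvt.ne rfl
    · exact hcross (hvY.symm.trans hsame.symm)
  · obtain ⟨j, hj, rfl, hjt | rfl⟩ := exists_getElem_eq_of_adj_of_not_reachable hr.1.2
      (k := t) (by omega) hvt.symm hvY
    · rcases hWsupp _ hv with h | ⟨s, hs, hts, hsj⟩
      · exact hvY h
      · have := hr.1.2.getElem_inj_iff.1 hsj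
        omega
    · exact hvt₁.ne rfl

theorem not_reachable_getElem_succ (hG : Chordal G) {t : ℕ} (ht : t + 1 < r.length) :
    ¬(G.deleteEdges (edgesOf r)).Reachable r[t] r[t + 1] := by
  induction t with
  | zero =>
    exact not_reachable_of_forall_reachable_or_reachable hr.2.1
      (hr.reachable_or_reachable_head ht)
  | succ t ih => exact hr.not_reachable_succ_succ hG ht (ih (by omega))

theorem adj_getElem_add_two (hG : Chordal G) {i : ℕ} (hi : i + 2 < r.length) :
    G.Adj r[i] r[i + 2] := by
  set H := G.deleteEdges (edgesOf r)
  have hcross : ¬H.Reachable r[i] r[i + 1] := hr.not_reachable_getElem_succ hG (t := i) (by omega)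
  have hcross' : ¬H.Reachable r[i + 1] r[i + 2] := hr.not_reachable_getElem_succ hG hi
  have hsame : H.Reachable r[i + 2] r[i] := reachable_of_not_reachable_of_not_reachable
    (hr.reachable_or_reachable_head (by omega)) hcross' (fun h => hcross h.symm)
  obtain ⟨Q, hQ, hQX⟩ := hsame.exists_isPath_forall_reachable (deleteEdges_le _)
  have hQ1 : 1 ≤ Q.length := by
    by_contra! h0
    have := hr.1.2.getElem_inj_iff.1 (Walk.eq_of_length_eq_zero (by omega : Q.length = 0))
    omega
  obtain ⟨v, hv, hvi, hvi₁⟩ := hG.exists_adj_adj_of_isPath (hr.1.1.2.getElem i (by omega))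
    (p := .cons (hr.1.1.2.getElem (i + 1) hi) Q)
    (Walk.cons_isPath_iff _ _ |>.2 ⟨hQ, fun hm => hcross (hQX _ hm).symm⟩) (by simpa using hQ1)
  rw [Walk.support_cons, List.mem_cons] at hv
  rcases hv with rfl | hv
  · exact absurd rfl hvi₁.ne
  obtain ⟨j, hj, rfl, hji | rfl⟩ := exists_getElem_eq_of_adj_of_not_reachable hr.1.2
    (k := i + 1) hi.le hvi₁.symm fun h => hcross ((hQX _ hv).symm.trans h)
  · obtain rfl : j = i := by omega
    exact absurd rfl hvi.ne
  · exact hvi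

end SeparatorPath

/-- For a separator path `r` and `0 ≤ i < |r| - 2`, the vertices `r_i` and
`r_{i+2}` are adjacent. -/
theorem separatorPath_adjacent
    {V : Type*} (G : SimpleGraph V)
    (hchordal : Chordal G)
    (r : List V) (hr : SeparatorPath G r)
    (i : ℕ) (h : i + 2 < r.length) :
    G.Adj (r.get ⟨i, by omega⟩) (r.get ⟨i + 2, h⟩) :=
  hr.adj_getElem_add_two hchordal h

end NSP
end

section
/- Let u be a bad vertex of G. Then no non-separating simple path from S to T visits u. -/
open SimpleGraph

/-! Let `a u b` be the two-edge separator path through the bad vertex `u`, and let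
`H = G - {au, ub}`. As `G` is connected and bridgeless, `u` is joined in `H` to neither `a` nor `b`:
if `a ~ u` in `H`, the non-bridge `ub` would give `u ~ b` as well and `H` would be connected.
The simple `S`–`T` path through `a u b` puts `S` in the component of `a` and `T` in that of `b`.
So a simple path `S → u → T` enters the component of `u` through one edge of `{au, ub}` and
leaves it through another; it contains both, and therefore separates `G`. -/

namespace SimpleGraph

variable {V : Type*} {G H : SimpleGraph V} {D : Set (Sym2 V)} {a b u v w x y : V}

lemma Reachable.of_forall_adj (h : ∀ ⦃x y⦄, G.Adj x y → H.Reachable x y)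
    (hvw : G.Reachable v w) : H.Reachable v w := by
  rw [reachable_iff_reflTransGen] at hvw ⊢
  exact Relation.ReflTransGen.lift' id (fun _ _ hxy => (reachable_iff_reflTransGen _ _).mp (h hxy))
    _ _ hvw

lemma Reachable.of_mk_eq (h : G.Reachable a b) (he : s(x, y) = s(a, b)) : G.Reachable x y := by
  rcases Sym2.eq_iff.mp he with ⟨rfl, rfl⟩ | ⟨rfl, rfl⟩
  exacts [h, h.symm]

lemma Reachable.deleteEdges_of_forall_mem
    (h : ∀ ⦃x y⦄, G.Adj x y → s(x, y) ∈ D → (G.deleteEdges D).Reachable x y)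
    (hvw : G.Reachable v w) : (G.deleteEdges D).Reachable v w := by
  refine hvw.of_forall_adj fun x y hxy => ?_
  by_cases hD : s(x, y) ∈ D
  exacts [h hxy hD, (deleteEdges_adj.mpr ⟨hxy, hD⟩).reachable]

lemma not_reachable_deleteEdges_pair (hconn : G.Connected) (hub : ¬ G.IsBridge s(u, b))
    (hsep : ¬ (G.deleteEdges {s(a, u), s(u, b)}).Connected) :
    ¬ (G.deleteEdges {s(a, u), s(u, b)}).Reachable a u := by
  intro hau
  have hH : (G.deleteEdges {s(u, b)}).deleteEdges {s(a, u)} =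
      G.deleteEdges {s(a, u), s(u, b)} := by
    rw [deleteEdges_deleteEdges, Set.union_singleton]
  have hub' : (G.deleteEdges {s(a, u), s(u, b)}).Reachable u b := by
    rw [← hH]
    refine Reachable.deleteEdges_of_forall_mem (fun x y _ hxy => ?_)
      (not_not.mp (isBridge_iff.not.mp hub))
    rw [hH]
    exact hau.of_mk_eq hxy
  refine hsep ((connected_iff _).mpr ⟨fun v w => ?_, hconn.nonempty⟩)
  refine Reachable.deleteEdges_of_forall_mem ?_ (hconn v w)
  rintro x y - (hxy | hxy)
  exacts [hau.of_mk_eq hxy, hub'.of_mk_eq hxy]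

end SimpleGraph

namespace NSP

variable {V : Type*} {G : SimpleGraph V} {D : Set (Sym2 V)} {p q : List V} {x y u : V}

@[simp]
lemma edgesOf_singleton (x : V) : edgesOf [x] = ∅ := by
  ext e
  simp [edgesOf]

lemma edgesOf_cons_cons (x y : V) (l : List V) :
    edgesOf (x :: y :: l) = insert s(x, y) (edgesOf (y :: l)) := by
  ext e
  constructor
  · rintro ⟨_ | i, h, rfl⟩
    · exact Or.inl rfl
    · exact Or.inr ⟨i, by simpa using h, rfl⟩
  · rintro (rfl | ⟨i, h, rfl⟩)
    · exact ⟨0, by simp, rfl⟩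
    · exact ⟨i + 1, by simpa using h, rfl⟩

lemma mem_of_mem_edgesOf {e : Sym2 V} (he : e ∈ edgesOf p) (hx : x ∈ e) : x ∈ p := by
  obtain ⟨i, h, rfl⟩ := he
  rcases Sym2.mem_iff.mp hx with rfl | rfl <;> exact List.get_mem _ _

lemma edgesOf_subset_of_isInfix (h : q <:+: p) : edgesOf q ⊆ edgesOf p := by
  obtain ⟨s, t, rfl⟩ := h
  rintro _ ⟨i, h, rfl⟩
  refine ⟨s.length + i, by simp; omega, ?_⟩
  simp [List.getElem_append_left, List.getElem_append_right, h, Nat.add_assoc,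
    (by omega : i < q.length)]

lemma edgesOf_subset_edgeSet (hp : p.IsChain G.Adj) : edgesOf p ⊆ G.edgeSet := by
  rintro _ ⟨i, h, rfl⟩
  exact List.isChain_iff_getElem.mp hp i h

lemma ContigSub.isInfix (h : ContigSub q p) : q <:+: p := by
  obtain ⟨i, j, -, -, rfl⟩ := h
  exact (List.drop_suffix _ _).isInfix.trans (List.take_prefix _ _).isInfix

lemma reachable_deleteEdges_of_disjoint (hp : p.IsChain G.Adj) (hx : p.head? = some x)
    (hy : p.getLast? = some y) (hD : Disjoint (edgesOf p) D) :
    (G.deleteEdges D).Reachable x y := by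
  induction p generalizing x with
  | nil => simp at hx
  | cons z l ih =>
    obtain rfl : x = z := by simpa using hx.symm
    cases l with
    | nil =>
      obtain rfl : y = x := by simpa using hy.symm
      rfl
    | cons w l =>
      rw [edgesOf_cons_cons, Set.disjoint_insert_left] at hD
      rw [List.isChain_cons_cons] at hp
      exact (SimpleGraph.deleteEdges_adj.mpr ⟨hp.1, hD.1⟩).reachable.trans
        (ih hp.2 rfl (by simpa using hy) hD.2)

lemma disjoint_edgesOf_prefix_suffix {l₁ l₂ : List V} (hp : IsSimpleSeq G (l₁ ++ u :: l₂)) :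
    Disjoint (edgesOf (l₁ ++ [u])) (edgesOf (u :: l₂)) := by
  rw [Set.disjoint_left]
  intro e he₁ he₂
  have hu : ∀ v ∈ e, v = u := fun v hv => by
    have hvl₁ := mem_of_mem_edgesOf he₁ hv
    have hvl₂ := mem_of_mem_edgesOf he₂ hv
    simp only [List.mem_append, List.mem_singleton] at hvl₁
    rcases hvl₁ with hvl₁ | rfl
    · exact absurd rfl ((List.nodup_append.mp hp.2).2.2 v hvl₁ v hvl₂)
    · rfl
  have hG := edgesOf_subset_edgeSet (hp.1.2.infix ⟨l₁, [], by simp⟩) he₂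
  induction e using Sym2.ind with
  | h v w =>
    obtain rfl := hu v (Sym2.mem_mk_left v w)
    obtain rfl := hu w (Sym2.mem_mk_right _ w)
    exact G.irrefl hG

lemma pair_subset_edgesOf_of_not_reachable {d₁ d₂ : Sym2 V} (hp : IsSimpleSeq G p)
    (hx : p.head? = some x) (hy : p.getLast? = some y) (hu : u ∈ p)
    (hxu : ¬ (G.deleteEdges {d₁, d₂}).Reachable x u)
    (huy : ¬ (G.deleteEdges {d₁, d₂}).Reachable u y) :
    {d₁, d₂} ⊆ edgesOf p := by
  obtain ⟨l₁, l₂, rfl⟩ := List.append_of_mem hu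
  have hpre : l₁ ++ [u] <:+: l₁ ++ u :: l₂ := ⟨[], l₂, by simp⟩
  have hsuf : u :: l₂ <:+: l₁ ++ u :: l₂ := ⟨l₁, [], by simp⟩
  obtain ⟨e₁, he₁, hd₁⟩ := Set.not_disjoint_iff.mp fun h =>
    hxu (reachable_deleteEdges_of_disjoint (hp.1.2.infix hpre) (by simpa using hx) (by simp) h)
  obtain ⟨e₂, he₂, hd₂⟩ := Set.not_disjoint_iff.mp fun h =>
    huy (reachable_deleteEdges_of_disjoint (hp.1.2.infix hsuf) (by simp) (by simpa using hy) h)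
  have hne : e₁ ≠ e₂ := (disjoint_edgesOf_prefix_suffix hp).ne_of_mem he₁ he₂
  have h₁ := edgesOf_subset_of_isInfix hpre he₁
  have h₂ := edgesOf_subset_of_isInfix hsuf he₂
  simp only [Set.mem_insert_iff, Set.mem_singleton_iff] at hd₁ hd₂
  rintro d (rfl | rfl) <;> grind

lemma Traversable.reachable_deleteEdges {S T a b : V} {r : List V} (h : Traversable G S T r)
    (ha : r.head? = some a) (hb : r.getLast? = some b) :
    (G.deleteEdges (edgesOf r)).Reachable S a ∧ (G.deleteEdges (edgesOf r)).Reachable b T := by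
  obtain ⟨P, hP, hS, hT, hr⟩ := h
  obtain ⟨l₁, l₂, rfl⟩ := hr.isInfix
  obtain ⟨r₁, hr₁⟩ := List.head?_eq_some_iff.mp ha
  obtain ⟨r₂, hr₂⟩ := List.getLast?_eq_some_iff.mp hb
  constructor
  · subst hr₁
    have hP' : IsSimpleSeq G (l₁ ++ a :: (r₁ ++ l₂)) := by simpa using hP
    refine reachable_deleteEdges_of_disjoint (p := l₁ ++ [a])
      (hP'.1.2.infix ⟨[], r₁ ++ l₂, by simp⟩) (by simpa using hS) (by simp) ?_
    exact (disjoint_edgesOf_prefix_suffix hP').mono_right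
      (edgesOf_subset_of_isInfix ⟨[], l₂, by simp⟩)
  · subst hr₂
    have hP' : IsSimpleSeq G ((l₁ ++ r₂) ++ b :: l₂) := by simpa using hP
    refine reachable_deleteEdges_of_disjoint (p := b :: l₂)
      (hP'.1.2.infix ⟨l₁ ++ r₂, [], by simp⟩) (by simp) (by simpa using hT) ?_
    exact ((disjoint_edgesOf_prefix_suffix hP').mono_left
      (edgesOf_subset_of_isInfix ⟨l₁, [], by simp⟩)).symm

lemma BadVertex.exists_pair {S T : V} (hu : BadVertex G S T u) :
    ∃ a b, SeparatingPath G [a, u, b] ∧ Traversable G S T [a, u, b] := by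
  obtain ⟨r, ⟨-, hsep, -⟩, htrav, hr, hru⟩ := hu
  obtain ⟨a, v, b, rfl⟩ := List.length_eq_three.mp hr
  obtain rfl : v = u := by simpa using hru
  exact ⟨a, b, hsep, htrav⟩

theorem bad_vertex_not_on_nonSeparating_path_general
    {V : Type*} (G : SimpleGraph V)
    (hconn : G.Connected)
    (S T : V) (hnb : ∀ e : Sym2 V, ¬ G.IsBridge e)
    (u : V) (hu : BadVertex G S T u)
    (p : List V) (hp : IsSimpleSeq G p)
    (hS : p.head? = some S) (hT : p.getLast? = some T)
    (hns : ¬ SeparatingPath G p) :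
    u ∉ p := by
  obtain ⟨a, b, hsep, htrav⟩ := hu.exists_pair
  have hr : edgesOf [a, u, b] = {s(a, u), s(u, b)} := by simp [edgesOf_cons_cons]
  obtain ⟨hSa, hbT⟩ := htrav.reachable_deleteEdges rfl rfl
  rw [hr] at hSa hbT
  rw [SeparatingPath, Separating, hr] at hsep
  have hau := SimpleGraph.not_reachable_deleteEdges_pair hconn (hnb _) hsep
  have hpair : ({s(a, u), s(u, b)} : Set (Sym2 V)) = {s(b, u), s(u, a)} := by
    rw [Set.pair_comm, Sym2.eq_swap, Sym2.eq_swap (a := a)]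
  have hub : ¬ (G.deleteEdges {s(a, u), s(u, b)}).Reachable u b := fun h =>
    SimpleGraph.not_reachable_deleteEdges_pair hconn (hnb _) (hpair ▸ hsep) (hpair ▸ h.symm)
  intro hup
  have hsub := pair_subset_edgesOf_of_not_reachable hp hS hT hup
    (fun h => hau (hSa.symm.trans h)) (fun h => hub (h.trans hbT.symm))
  exact hns fun hconn' => hsep (hconn'.mono (SimpleGraph.deleteEdges_anti hsub))

/-- No non-separating simple path from `S` to `T` visits a bad vertex. -/
theorem bad_vertex_not_on_nonSeparating_path
    {V : Type*} [Fintype V] (G : SimpleGraph V)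
    (hconn : G.Connected) (hchordal : Chordal G)
    (S T : V) (hST : S ≠ T) (hnb : ∀ e : Sym2 V, ¬ G.IsBridge e)
    (u : V) (hu : BadVertex G S T u)
    (p : List V) (hp : IsSimpleSeq G p)
    (hS : p.head? = some S) (hT : p.getLast? = some T)
    (hns : ¬ SeparatingPath G p) :
    u ∉ p :=
  bad_vertex_not_on_nonSeparating_path_general G hconn S T hnb u hu p hp hS hT hns

end NSP
end

section
/- If r and q are useful separator paths, then for every index i with 0 ≤ i < |r|−2, the edge between r_i and r_{i+2} (which exists because r is a separator path) is not an edge of q. -/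
open SimpleGraph

/-!
Suppose the chord `r_i r_{i+2}` is an edge of `q`. If `q` also contains `r_i r_{i+1}` (or
`r_{i+1} r_{i+2}`), these two edges of the simple path `q` share a vertex and are therefore
consecutive on `q`; adding the usefulness inequality of `q` at that vertex to the one of `r` at
`r_{i+1}` gives `2 L(r_i, r_{i+1}) < 0` (resp. `2 L(r_{i+1}, r_{i+2}) < 0`).

Otherwise `r_i` and `r_{i+2}` are joined in `G - E(q)`. This is impossible: when `G` is
chordal, the two ends of every edge of a separator path `q` lie in different components of
`G - E(q)`. By minimality of `q`, `G - E(q)` arises from a connected graph by deleting the last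
(or the first) edge of `q`, so it has exactly two components, and the first and last edges of `q`
join them. If some edge `q_a q_{a+1}` did not, take the maximal run `q_{j+1}, …, q_{j'}` of `q`
around it inside one component; then `q_j` and `q_{j'+1}` lie in the other component and are
joined there by a path, which closes up with the run into a cycle of length at least four. In a
shortest such cycle no chord lies inside the run or inside the path, and a chord between them
would be an edge of `q` leaving the component of the run, i.e. one of the edges `q_j q_{j+1}`,
`q_{j'} q_{j'+1}` of the cycle.
-/

namespace SimpleGraph

variable {V : Type*} {G : SimpleGraph V}

namespace Walk

theorem exists_length_lt_of_adj_start_s15 {u y w : V} (W : G.Walk u y) (hw : w ∈ W.support)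
    (hadj : G.Adj u w) (hne : s(u, w) ∉ W.edges) :
    ∃ W' : G.Walk u y, W'.length < W.length ∧ W'.support ⊆ W.support := by
  classical
  have hlen : 2 ≤ (W.takeUntil w hw).length := by
    by_contra! h
    interval_cases hl : (W.takeUntil w hw).length
    · exact hadj.ne (eq_of_length_eq_zero hl)
    · have hT : W.takeUntil w hw = hadj.toWalk := eq_of_length_le_one (by omega) (by simp)
      exact hne (W.edges_takeUntil_subset_edges hw (by simp [hT]))
  refine ⟨cons hadj (W.dropUntil w hw), ?_, ?_⟩
  · have := congrArg length (W.take_spec hw)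
    rw [length_append] at this
    rw [length_cons]
    omega
  · intro v hv
    rw [support_cons, List.mem_cons] at hv
    rcases hv with rfl | hv
    · exact start_mem_support W
    · exact W.support_dropUntil_subset_support hw hv

theorem exists_length_lt_of_adj {x y u w : V} (A : G.Walk x y) (hu : u ∈ A.support)
    (hw : w ∈ A.support) (hadj : G.Adj u w) (hne : s(u, w) ∉ A.edges) :
    ∃ A' : G.Walk x y, A'.length < A.length ∧ A'.support ⊆ A.support := by
  classical
  set T := A.takeUntil u hu
  set D := A.dropUntil u hu
  have hA : T.append D = A := A.take_spec hu
  have hTA : T.support ⊆ A.support := A.support_takeUntil_subset_support hu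
  have hDA : D.support ⊆ A.support := A.support_dropUntil_subset_support hu
  have hlen : A.length = T.length + D.length := by rw [← hA, length_append]
  have hw' : w ∈ T.support ∨ w ∈ D.support := by
    rw [← mem_support_append_iff, hA]; exact hw
  rcases hw' with hwT | hwD
  · obtain ⟨T', hT'len, hT'sub⟩ := T.reverse.exists_length_lt_of_adj_start_s15
      (by simpa using hwT) hadj
      (fun h => hne (A.edges_takeUntil_subset_edges hu (by simpa using h)))
    refine ⟨T'.reverse.append D, ?_, ?_⟩
    · simp only [length_append, length_reverse] at hT'len ⊢
      omega
    · intro v hv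
      rw [mem_support_append_iff, support_reverse, List.mem_reverse] at hv
      rcases hv with hv | hv
      · exact hTA (by simpa using hT'sub hv)
      · exact hDA hv
  · obtain ⟨D', hD'len, hD'sub⟩ := D.exists_length_lt_of_adj_start_s15 hwD hadj
      (fun h => hne (A.edges_dropUntil_subset_edges hu h))
    refine ⟨T.append D', ?_, ?_⟩
    · rw [length_append]; omega
    · intro v hv
      rcases (mem_support_append_iff _ _).mp hv with hv | hv
      · exact hTA hv
      · exact hDA (hD'sub hv)

end Walk

theorem Connected.reachable_or_reachable_deleteEdges (hG : G.Connected) (a b v : V) :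
    (G.deleteEdges {s(a, b)}).Reachable v a ∨ (G.deleteEdges {s(a, b)}).Reachable v b := by
  classical
  obtain ⟨P, hP⟩ := hG.exists_isPath v a
  by_cases heP : s(a, b) ∈ P.edges
  · have hbP := P.snd_mem_support_of_mem_edges heP
    have haP₁ := Walk.endpoint_notMem_support_takeUntil hP hbP (P.adj_of_mem_edges heP).ne
    exact Or.inr (reachable_deleteEdges_iff_exists_walk.mpr
      ⟨P.takeUntil b hbP, fun h => haP₁ ((P.takeUntil b hbP).fst_mem_support_of_mem_edges h)⟩)
  · exact Or.inl (reachable_deleteEdges_iff_exists_walk.mpr ⟨P, heP⟩)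

/-- Deleting an edge from a connected graph leaves at most two components. -/
theorem Connected.reachable_deleteEdges_of_not_reachable (hG : G.Connected) {a b u v x : V}
    (hu : ¬ (G.deleteEdges {s(a, b)}).Reachable u x)
    (hv : ¬ (G.deleteEdges {s(a, b)}).Reachable v x) :
    (G.deleteEdges {s(a, b)}).Reachable u v := by
  rcases hG.reachable_or_reachable_deleteEdges a b u with hu' | hu' <;>
  rcases hG.reachable_or_reachable_deleteEdges a b v with hv' | hv' <;>
  rcases hG.reachable_or_reachable_deleteEdges a b x with hx' | hx'
  all_goals first
    | exact hu'.trans hv'.symm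
    | exact absurd (hu'.trans hx'.symm) hu
    | exact absurd (hv'.trans hx'.symm) hv

theorem Connected.not_reachable_deleteEdges (hG : G.Connected) {a b : V}
    (h : ¬ (G.deleteEdges {s(a, b)}).Connected) : ¬ (G.deleteEdges {s(a, b)}).Reachable a b :=
  fun hab => h (hG.connected_delete_edge_of_not_isBridge fun hb => isBridge_iff.mp hb hab)

end SimpleGraph

theorem Nat.exists_maximal_run {P : ℕ → Prop} {s a t : ℕ} (hs : P s) (ht : P t) (hsa : s ≤ a)
    (hat : a ≤ t) (ha : ¬ P a) :
    ∃ j₁ j₂, j₁ < a ∧ a < j₂ ∧ j₂ ≤ t ∧ P j₁ ∧ P j₂ ∧ ∀ k, j₁ < k → k < j₂ → ¬ P k := by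
  classical
  have hex : ∃ m, P (a + m) := ⟨t - a, by rwa [Nat.add_sub_cancel' hat]⟩
  have hj₁ : P (Nat.findGreatest P a) := Nat.findGreatest_spec hsa hs
  have hm : Nat.find hex ≠ 0 := fun h => ha (by simpa [h] using Nat.find_spec hex)
  refine ⟨Nat.findGreatest P a, a + Nat.find hex, ?_, by omega, ?_, hj₁, Nat.find_spec hex, ?_⟩
  · exact lt_of_le_of_ne (Nat.findGreatest_le a) fun h => ha (h ▸ hj₁)
  · have := Nat.find_min' hex (m := t - a) (by rwa [Nat.add_sub_cancel' hat])
    omega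
  · intro k hk₁ hk₂ hk
    rcases Nat.lt_or_ge a k with hak | hka
    · exact Nat.find_min hex (m := k - a) (by omega) (by rwa [Nat.add_sub_cancel' hak.le])
    · exact Nat.findGreatest_is_greatest hk₁ hka hk

namespace NSP

variable {V : Type*} {G : SimpleGraph V}

open Walk

/-- The paths `A`, `B` and the edges `a' a`, `b b'` form a cycle; a chord with both ends on one
path shortens that path, so by induction on the total length some chord runs between them. -/
theorem Chordal.exists_adj_of_isPath (hG : Chordal G) {a b a' b' : V}
    (A : G.Walk a b) (B : G.Walk b' a') (hA : A.IsPath) (hB : B.IsPath)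
    (hAB : A.support.Disjoint B.support) (hab : a ≠ b) (hab' : b' ≠ a')
    (ha : G.Adj a' a) (hb : G.Adj b b') :
    ∃ u ∈ A.support, ∃ v ∈ B.support, G.Adj u v ∧ s(u, v) ≠ s(a', a) ∧ s(u, v) ≠ s(b, b') := by
  classical
  obtain ⟨n, hn⟩ : ∃ n, A.length + B.length = n := ⟨_, rfl⟩
  induction n using Nat.strong_induction_on generalizing A B with
  | _ n ih =>
  have hApos : A.length ≠ 0 := fun h => hab (eq_of_length_eq_zero h)
  have hBpos : B.length ≠ 0 := fun h => hab' (eq_of_length_eq_zero h)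
  set c := (cons ha A).append (cons hb B)
  have hc : c.IsCycle := by
    refine IsPath.isCycle_append (hA.cons fun h => hAB h B.end_mem_support)
      (hB.cons fun h => hAB A.end_mem_support h) (by simpa using hAB) (Or.inl ?_)
    rw [length_cons]; omega
  have hclen : 4 ≤ c.length := by simp only [c, length_append, length_cons]; omega
  have hsupp : ∀ x ∈ c.support, x ∈ A.support ∨ x ∈ B.support := by
    intro x hx
    simp only [c, mem_support_append_iff, support_cons, List.mem_cons] at hx
    rcases hx with (rfl | hx) | (rfl | hx)
    · exact Or.inr B.end_mem_support
    · exact Or.inl hx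
    · exact Or.inl A.end_mem_support
    · exact Or.inr hx
  have hedges : c.edges = s(a', a) :: (A.edges ++ s(b, b') :: B.edges) := by
    simp [c, edges_append]
  obtain ⟨u, v, hu, hv, huv, hchord⟩ := hG c hc hclen
  rw [hedges] at hchord
  simp only [List.mem_cons, List.mem_append, not_or] at hchord
  obtain ⟨hne₁, hnA, hne₂, hnB⟩ := hchord
  rcases hsupp u hu with huA | huB <;> rcases hsupp v hv with hvA | hvB
  · obtain ⟨A', hlen, hsub⟩ := A.exists_length_lt_of_adj huA hvA huv hnA
    have hsub' : A'.bypass.support ⊆ _ := fun x hx => hsub (A'.support_bypass_subset_support hx)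
    obtain ⟨x, hx, y, hy, hxy⟩ := ih _ (by rw [← hn]; have := A'.length_bypass_le_length; omega)
      A'.bypass B A'.bypass_isPath hB (fun x hx => hAB (hsub' hx)) rfl
    exact ⟨x, hsub' hx, y, hy, hxy⟩
  · exact ⟨u, huA, v, hvB, huv, hne₁, hne₂⟩
  · exact ⟨v, hvA, u, huB, huv.symm, by rwa [Sym2.eq_swap], by rwa [Sym2.eq_swap]⟩
  · obtain ⟨B', hlen, hsub⟩ := B.exists_length_lt_of_adj huB hvB huv hnB
    have hsub' : B'.bypass.support ⊆ _ := fun x hx => hsub (B'.support_bypass_subset_support hx)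
    obtain ⟨x, hx, y, hy, hxy⟩ := ih _ (by rw [← hn]; have := B'.length_bypass_le_length; omega)
      A B'.bypass hA B'.bypass_isPath (fun x hx hx' => hAB hx (hsub' hx')) rfl
    exact ⟨x, hx, y, hsub' hy, hxy⟩

theorem mem_edgesOf {p : List V} {e : Sym2 V} :
    e ∈ edgesOf p ↔ ∃ (k : ℕ) (hk : k + 1 < p.length), e = s(p[k], p[k + 1]) := .rfl

theorem mem_of_mk_mem_edgesOf {p : List V} {x y : V} (h : s(x, y) ∈ edgesOf p) : x ∈ p := by
  obtain ⟨k, hk, he⟩ := mem_edgesOf.mp h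
  rcases Sym2.eq_iff.mp he with ⟨rfl, -⟩ | ⟨rfl, -⟩ <;> exact List.getElem_mem _

theorem exists_eq_of_mk_mem_edgesOf {p : List V} (hp : p.Nodup) {m : ℕ} (hm : m < p.length)
    {y : V} (h : s(p[m], y) ∈ edgesOf p) :
    ∃ (k : ℕ) (hk : k + 1 < p.length), (m = k ∧ y = p[k + 1]) ∨ (m = k + 1 ∧ y = p[k]) := by
  obtain ⟨k, hk, he⟩ := mem_edgesOf.mp h
  refine ⟨k, hk, ?_⟩
  rcases Sym2.eq_iff.mp he with ⟨hm', hy⟩ | ⟨hm', hy⟩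
  · exact Or.inl ⟨hp.getElem_inj_iff.mp hm', hy⟩
  · exact Or.inr ⟨hp.getElem_inj_iff.mp hm', hy⟩

theorem Useful.lt_of_mk_mem_edgesOf {w : Sym2 V → ℝ} {q : List V} (hqu : Useful w q)
    (hq : q.Nodup) {x y z : V} (hy : s(x, y) ∈ edgesOf q) (hz : s(x, z) ∈ edgesOf q)
    (hyz : y ≠ z) : w s(y, x) + w s(x, z) < w s(y, z) := by
  obtain ⟨m, hm, rfl⟩ := List.getElem_of_mem (mem_of_mk_mem_edgesOf hy)
  obtain ⟨k, hk, ⟨rfl, rfl⟩ | ⟨rfl, rfl⟩⟩ := exists_eq_of_mk_mem_edgesOf hq hm hy <;>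
  obtain ⟨l, hl, ⟨hlk, rfl⟩ | ⟨hlk, rfl⟩⟩ := exists_eq_of_mk_mem_edgesOf hq hm hz
  · exact absurd (by subst hlk; rfl) hyz
  · subst hlk
    have h := hqu l hk
    simp only [List.get_eq_getElem, Sym2.eq_swap, add_assoc, Nat.reduceAdd] at h ⊢
    linarith
  · subst hlk
    exact hqu k hl
  · obtain rfl : k = l := by omega
    exact absurd rfl hyz

theorem IsPathSeq.adj_getElem {p : List V} (hp : IsPathSeq G p) {k : ℕ} (hk : k + 1 < p.length) :
    G.Adj p[k] p[k + 1] :=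
  List.isChain_iff_getElem.mp hp.2 k hk

theorem IsPathSeq.exists_walk {p : List V} (hp : IsPathSeq G p) {i j : ℕ} (hij : i ≤ j)
    (hj : j < p.length) :
    ∃ A : G.Walk p[i] p[j],
      ∀ v ∈ A.support, ∃ (k : ℕ) (hk : k < p.length), i ≤ k ∧ k ≤ j ∧ p[k] = v := by
  induction j, hij using Nat.le_induction with
  | base => exact ⟨nil, fun v hv => ⟨i, _, le_rfl, le_rfl, (List.mem_singleton.mp hv).symm⟩⟩
  | succ j hij ih =>
    obtain ⟨A, hA⟩ := ih (by omega)
    refine ⟨A.concat (hp.adj_getElem hj), fun v hv => ?_⟩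
    rw [support_concat, List.mem_append, List.mem_singleton] at hv
    rcases hv with hv | rfl
    · obtain ⟨k, hk, hik, hkj, rfl⟩ := hA v hv
      exact ⟨k, hk, hik, by omega, rfl⟩
    · exact ⟨j + 1, hj, by omega, le_rfl, rfl⟩

theorem edgesOf_eq_take_union {p : List V} {n : ℕ} (hn : p.length = n + 2) :
    edgesOf p = edgesOf (p.take (n + 1)) ∪ {s(p[n], p[n + 1])} := by
  ext e
  simp only [Set.mem_union, Set.mem_singleton_iff, mem_edgesOf, List.length_take,
    List.getElem_take]
  constructor
  · rintro ⟨k, hk, rfl⟩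
    rcases Nat.lt_or_ge k n with hkn | hkn
    · exact Or.inl ⟨k, by omega, rfl⟩
    · obtain rfl : k = n := by omega
      exact Or.inr rfl
  · rintro (⟨k, hk, rfl⟩ | rfl)
    · exact ⟨k, by omega, rfl⟩
    · exact ⟨n, by omega, rfl⟩

theorem edgesOf_eq_drop_union {p : List V} (hp : 1 < p.length) :
    edgesOf p = edgesOf (p.drop 1) ∪ {s(p[0], p[1])} := by
  ext e
  simp only [Set.mem_union, Set.mem_singleton_iff, mem_edgesOf, List.length_drop,
    List.getElem_drop]
  constructor
  · rintro ⟨k, hk, rfl⟩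
    rcases k with _ | k
    · exact Or.inr rfl
    · exact Or.inl ⟨k, by omega, by simp only [Nat.add_comm 1]⟩
  · rintro (⟨k, hk, rfl⟩ | rfl)
    · exact ⟨k + 1, by omega, by simp only [Nat.add_comm 1]⟩
    · exact ⟨0, hp, rfl⟩

section Separator

variable {q : List V} (hq : SeparatorPath G q)
include hq

theorem SeparatorPath.connected_deleteEdges_take {n : ℕ} (hn : q.length = n + 2) :
    (G.deleteEdges (edgesOf (q.take (n + 1)))).Connected :=
  not_not.mp <| hq.2.2 _ ⟨0, n, n.zero_le, by omega, by simp [subseq]⟩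
    fun h => by simpa [hn] using congrArg List.length h

theorem SeparatorPath.connected_deleteEdges_drop (hlen : 1 < q.length) :
    (G.deleteEdges (edgesOf (q.drop 1))).Connected :=
  not_not.mp <| hq.2.2 _ ⟨1, q.length - 1, by omega, by omega,
    by simp [subseq, Nat.sub_add_cancel (by omega : 1 ≤ q.length)]⟩
    fun h => by have := congrArg List.length h; simp at this; omega

theorem SeparatorPath.not_reachable_last {n : ℕ} (hn : q.length = n + 2) :
    ¬ (G.deleteEdges (edgesOf q)).Reachable q[n] q[n + 1] := by
  have hsep : ¬ (G.deleteEdges (edgesOf q)).Connected := hq.2.1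
  rw [edgesOf_eq_take_union hn, ← deleteEdges_deleteEdges] at hsep ⊢
  exact (hq.connected_deleteEdges_take hn).not_reachable_deleteEdges hsep

theorem SeparatorPath.not_reachable_first (hlen : 1 < q.length) :
    ¬ (G.deleteEdges (edgesOf q)).Reachable q[0] q[1] := by
  have hsep : ¬ (G.deleteEdges (edgesOf q)).Connected := hq.2.1
  rw [edgesOf_eq_drop_union hlen, ← deleteEdges_deleteEdges] at hsep ⊢
  exact (hq.connected_deleteEdges_drop hlen).not_reachable_deleteEdges hsep

theorem SeparatorPath.reachable_of_not_reachable (hlen : 1 < q.length) {u v x : V}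
    (hu : ¬ (G.deleteEdges (edgesOf q)).Reachable u x)
    (hv : ¬ (G.deleteEdges (edgesOf q)).Reachable v x) :
    (G.deleteEdges (edgesOf q)).Reachable u v := by
  rw [edgesOf_eq_drop_union hlen, ← deleteEdges_deleteEdges] at hu hv ⊢
  exact (hq.connected_deleteEdges_drop hlen).reachable_deleteEdges_of_not_reachable hu hv

end Separator

theorem Chordal.not_reachable_of_run (hG : Chordal G) {q : List V} (hq : IsSimpleSeq G q)
    {j₁ j₂ : ℕ} (hj : j₁ + 1 < j₂) (hj₂ : j₂ + 1 < q.length)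
    (hrun : ∀ k, j₁ < k → ∀ _ : k ≤ j₂,
      (G.deleteEdges (edgesOf q)).Reachable q[j₁ + 1] q[k])
    (h₁ : ¬ (G.deleteEdges (edgesOf q)).Reachable q[j₁ + 1] q[j₁])
    (h₂ : ¬ (G.deleteEdges (edgesOf q)).Reachable q[j₁ + 1] q[j₂ + 1]) :
    ¬ (G.deleteEdges (edgesOf q)).Reachable q[j₂ + 1] q[j₁] := by
  classical
  rintro ⟨B⟩
  obtain ⟨A, hA⟩ := hq.1.exists_walk (i := j₁ + 1) (j := j₂) hj.le (by omega)
  set B' := (B.mapLe (G.deleteEdges_le _)).bypass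
  have hA' : ∀ v ∈ A.bypass.support,
      ∃ (k : ℕ) (hk : k < q.length), j₁ + 1 ≤ k ∧ k ≤ j₂ ∧ q[k] = v :=
    fun v hv => hA v (A.support_bypass_subset_support hv)
  have hB' : ∀ v ∈ B'.support, ¬ (G.deleteEdges (edgesOf q)).Reachable q[j₁ + 1] v := by
    intro v hv hv'
    have hvB : v ∈ B.support := by
      simpa using (B.mapLe (G.deleteEdges_le _)).support_bypass_subset_support hv
    exact h₂ (hv'.trans ⟨(B.takeUntil v hvB).reverse⟩)
  have hdisj : A.bypass.support.Disjoint B'.support := by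
    intro v hvA hvB
    obtain ⟨k, hk, hk₁, hk₂, rfl⟩ := hA' v hvA
    exact hB' _ hvB (hrun k (by omega) hk₂)
  have hne : ∀ {k l : ℕ} (hk : k < q.length) (hl : l < q.length), k ≠ l → q[k] ≠ q[l] :=
    fun _ _ hkl h => hkl (hq.2.getElem_inj_iff.mp h)
  obtain ⟨u, hu, v, hv, huv, hne₁, hne₂⟩ := hG.exists_adj_of_isPath A.bypass B'
    A.bypass_isPath (B.mapLe _).bypass_isPath hdisj (hne _ _ (by omega)) (hne _ _ (by omega))
    (hq.1.adj_getElem (by omega)) (hq.1.adj_getElem hj₂)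
  obtain ⟨k, hk, hk₁, hk₂, rfl⟩ := hA' u hu
  have hvR := hB' v hv
  have huv' : s(q[k], v) ∈ edgesOf q := by
    by_contra h
    exact hvR ((hrun k (by omega) hk₂).trans (deleteEdges_adj.mpr ⟨huv, h⟩).reachable)
  obtain ⟨l, hl, ⟨hkl, rfl⟩ | ⟨hkl, rfl⟩⟩ := exists_eq_of_mk_mem_edgesOf hq.2 hk huv'
  · subst hkl
    rcases Nat.lt_or_ge k j₂ with hkj | hkj
    · exact hvR (hrun (k + 1) (by omega) hkj)
    · obtain rfl : k = j₂ := by omega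
      exact hne₂ rfl
  · subst hkl
    rcases Nat.lt_or_ge j₁ l with hlj | hlj
    · exact hvR (hrun l hlj (by omega))
    · obtain rfl : l = j₁ := by omega
      exact hne₁ Sym2.eq_swap

theorem SeparatorPath.not_reachable_getElem (hG : Chordal G) {q : List V}
    (hq : SeparatorPath G q) {a : ℕ} (ha : a + 1 < q.length) :
    ¬ (G.deleteEdges (edgesOf q)).Reachable q[a] q[a + 1] := by
  obtain ⟨n, hn⟩ : ∃ n, q.length = n + 2 := ⟨q.length - 2, by omega⟩
  intro hreach
  obtain ⟨j₁, j₂, hj₁, hj₂, hj₂n, ⟨_, hP₁⟩, ⟨_, hP₂⟩, hgap⟩ := Nat.exists_maximal_run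
    (P := fun k => ∃ hk : k + 1 < q.length,
      ¬ (G.deleteEdges (edgesOf q)).Reachable q[k] q[k + 1])
    ⟨by omega, hq.not_reachable_first (by omega)⟩ ⟨by omega, hq.not_reachable_last hn⟩
    (Nat.zero_le a) (by omega) fun ⟨_, h⟩ => h hreach
  have hrun : ∀ k, j₁ < k → ∀ _ : k ≤ j₂,
      (G.deleteEdges (edgesOf q)).Reachable q[j₁ + 1] q[k] := by
    intro k hk₁ hk₂
    induction k, hk₁ using Nat.le_induction with
    | base => rfl
    | succ k hk ih =>
      exact (ih (by omega)).trans (by_contra fun h => hgap k (by omega) (by omega) ⟨by omega, h⟩)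
  have h₂ : ¬ (G.deleteEdges (edgesOf q)).Reachable q[j₁ + 1] q[j₂ + 1] :=
    fun h => hP₂ ((hrun j₂ (by omega) le_rfl).symm.trans h)
  exact hG.not_reachable_of_run hq.1 (by omega) (by omega) hrun (fun h => hP₁ h.symm) h₂
    (hq.reachable_of_not_reachable (by omega) (fun h => h₂ h.symm) (fun h => hP₁ h))

theorem SeparatorPath.not_reachable_of_mem_edgesOf (hG : Chordal G) {q : List V}
    (hq : SeparatorPath G q) {u v : V} (he : s(u, v) ∈ edgesOf q) :
    ¬ (G.deleteEdges (edgesOf q)).Reachable u v := by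
  obtain ⟨k, hk, he⟩ := mem_edgesOf.mp he
  rcases Sym2.eq_iff.mp he with ⟨rfl, rfl⟩ | ⟨rfl, rfl⟩
  · exact hq.not_reachable_getElem hG hk
  · exact fun h => hq.not_reachable_getElem hG hk h.symm

/-- If `r` and `q` are useful separator paths, then for `0 ≤ i < |r| - 2`
the edge between `r_i` and `r_{i+2}` is not an edge of `q`. -/
theorem useful_chord_not_on_other
    {V : Type*} (G : SimpleGraph V)
    (hchordal : Chordal G)
    (w : Sym2 V → ℝ) (hw : EdgePos G w)
    (r q : List V)
    (hr : SeparatorPath G r) (hru : Useful w r)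
    (hq : SeparatorPath G q) (hqu : Useful w q)
    (i : ℕ) (h : i + 2 < r.length) :
    s(r.get ⟨i, by omega⟩, r.get ⟨i + 2, h⟩) ∉ edgesOf q := by
  simp only [List.get_eq_getElem]
  intro hchord
  have hux : G.Adj r[i] r[i + 1] := hr.1.1.adj_getElem (by omega)
  have hxv : G.Adj r[i + 1] r[i + 2] := hr.1.1.adj_getElem h
  have hr_lt : w s(r[i], r[i + 1]) + w s(r[i + 1], r[i + 2]) < w s(r[i], r[i + 2]) := hru i h
  by_cases h₁ : s(r[i], r[i + 1]) ∈ edgesOf q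
  · have hq_lt := hqu.lt_of_mk_mem_edgesOf hq.1.2 h₁ hchord hxv.ne
    have := hw _ (G.mem_edgeSet.mpr hux)
    rw [Sym2.eq_swap (a := r[i + 1]) (b := r[i])] at hq_lt
    linarith
  by_cases h₂ : s(r[i + 1], r[i + 2]) ∈ edgesOf q
  · have hq_lt := hqu.lt_of_mk_mem_edgesOf hq.1.2 (x := r[i + 2]) (by rwa [Sym2.eq_swap])
      (by rwa [Sym2.eq_swap]) hux.ne.symm
    have := hw _ (G.mem_edgeSet.mpr hxv)
    rw [Sym2.eq_swap (a := r[i + 2]), Sym2.eq_swap (a := r[i + 1]) (b := r[i])] at hq_lt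
    linarith
  exact hq.not_reachable_of_mem_edgesOf hchordal hchord
    ((deleteEdges_adj.mpr ⟨hux, h₁⟩).reachable.trans (deleteEdges_adj.mpr ⟨hxv, h₂⟩).reachable)

end NSP
end
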